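/- arXiv:1410.7535 — 12 statements merged into one kernel-verified Lean document; each statement's English description precedes it below -/
import Mathlib

section
/- Let G be a finite group admitting a small Mathieu representation. Then the order of G equals 2^{a₂}·3^{a₃}·5^{a₅}·11^{a₁₁} for some non-negative integers a₂ ≤ 4, a₃ ≤ 2, a₅ ≤ 1, a₁₁ ≤ 1. -/
/-- The character value of the small Mathieu representation at an element of the given order. -/
def mathieuCharValue : ℕ → ℂ
  | 1 => 12
  | 2 => 4
  | 3 => 3
  | 4 => 4
  | 5 => 2
  | 6 => 1
  | 8 => 2
  | 11 => 1
  | _ => 0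

/-- A representation is a small Mathieu representation if it is 12-dimensional, every group
element has order in {1,2,3,4,5,6,8,11}, and the character at `g` depends only on the order
of `g`, with the values of the permutation character of `M₁₁` acting on 12 points. -/
def IsSmallMathieuRep {G : Type*} [Group G] {V : Type*} [AddCommGroup V] [Module ℂ V]
    (ρ : Representation ℂ G V) : Prop :=
  Module.finrank ℂ V = 12 ∧
    (∀ g : G, orderOf g ∈ ({1, 2, 3, 4, 5, 6, 8, 11} : Set ℕ)) ∧
    (∀ g : G, LinearMap.trace ℂ V (ρ g) = mathieuCharValue (orderOf g))

/-- `G` admits a small Mathieu representation. -/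
def HasSmallMathieuRep (G : Type*) [Group G] : Prop :=
  ∃ (V : Type) (_ : AddCommGroup V) (_ : Module ℂ V) (ρ : Representation ℂ G V),
    IsSmallMathieuRep ρ

/-- Natural-number version of `mathieuCharValue`. -/
def mVal : ℕ → ℕ
  | 1 => 12 | 2 => 4 | 3 => 3 | 4 => 4 | 5 => 2 | 6 => 1 | 8 => 2 | 11 => 1 | _ => 0

open Module LinearMap

lemma card_dvd_sum_of_trace_eq {H : Type*} [Group H] [Fintype H]
    {V : Type*} [AddCommGroup V] [Module ℂ V] [FiniteDimensional ℂ V]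
    (ρ : Representation ℂ H V) (f : H → ℕ)
    (hf : ∀ g, LinearMap.trace ℂ V (ρ g) = (f g : ℂ)) :
    Fintype.card H ∣ ∑ g : H, f g := by
  have hc0 : (Fintype.card H : ℂ) ≠ 0 := Nat.cast_ne_zero.mpr Fintype.card_ne_zero
  letI : Invertible (Fintype.card H : ℂ) := invertibleOfNonzero hc0
  have key : ⅟ (Fintype.card H : ℂ) • ∑ g : H, LinearMap.trace ℂ V (ρ g)
      = (finrank ℂ (Representation.invariants ρ) : ℂ) := by
    rw [← (Representation.isProj_averageMap ρ).trace]
    simp [Representation.averageMap, GroupAlgebra.average, map_sum]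
  have hsum : ∑ g : H, LinearMap.trace ℂ V (ρ g) = ((∑ g : H, f g : ℕ) : ℂ) := by
    rw [Nat.cast_sum]; exact Finset.sum_congr rfl fun g _ => hf g
  rw [hsum, invOf_eq_inv, inv_smul_eq_iff₀ hc0, smul_eq_mul] at key
  refine ⟨finrank ℂ (Representation.invariants ρ), ?_⟩
  exact_mod_cast key

lemma sylow_dvd_sums {G : Type*} [Group G]
    {V : Type*} [AddCommGroup V] [Module ℂ V] [FiniteDimensional ℂ V]
    (ρ : Representation ℂ G V)
    (htr : ∀ g : G, LinearMap.trace ℂ V (ρ g) = (mVal (orderOf g) : ℂ))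
    (H : Subgroup G) [Fintype H] :
    (Fintype.card H ∣ ∑ x : H, mVal (orderOf x)) ∧
    (Fintype.card H ∣ ∑ x : H, mVal (orderOf x) * mVal (orderOf x)) := by
  let ρH : Representation ℂ H V := ρ.comp H.subtype
  have h1 : ∀ x : H, LinearMap.trace ℂ V (ρH x) = (mVal (orderOf x) : ℂ) := by
    intro x
    rw [MonoidHom.comp_apply, htr, orderOf_injective H.subtype H.subtype_injective x]
  constructor
  · exact card_dvd_sum_of_trace_eq ρH _ h1
  · have h2 : ∀ x : H, LinearMap.trace ℂ (TensorProduct ℂ V V)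
        ((ρH.tprod ρH) x)
        = ((mVal (orderOf x) * mVal (orderOf x) : ℕ) : ℂ) := by
      intro x
      rw [Representation.tprod_apply, LinearMap.trace_tensorProduct', h1, Nat.cast_mul]
    exact card_dvd_sum_of_trace_eq _ _ h2

lemma val3 {d n : ℕ} (hd : d ∣ 3 ^ n)
    (hs : d = 1 ∨ d = 2 ∨ d = 3 ∨ d = 4 ∨ d = 5 ∨ d = 6 ∨ d = 8 ∨ d = 11) (h1 : d ≠ 1) :
    mVal d = 3 := by
  have key : ∀ q : ℕ, q.Prime → q ∣ d → q ∣ 3 := fun q hq hqd => hq.dvd_of_dvd_pow (hqd.trans hd)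
  rcases hs with rfl|rfl|rfl|rfl|rfl|rfl|rfl|rfl
  · exact absurd rfl h1
  · exact absurd (key 2 Nat.prime_two (by norm_num)) (by norm_num)
  · rfl
  · exact absurd (key 2 Nat.prime_two (by norm_num)) (by norm_num)
  · exact absurd (key 5 (by norm_num) (by norm_num)) (by norm_num)
  · exact absurd (key 2 Nat.prime_two (by norm_num)) (by norm_num)
  · exact absurd (key 2 Nat.prime_two (by norm_num)) (by norm_num)
  · exact absurd (key 11 (by norm_num) (by norm_num)) (by norm_num)

lemma val5 {d n : ℕ} (hd : d ∣ 5 ^ n)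
    (hs : d = 1 ∨ d = 2 ∨ d = 3 ∨ d = 4 ∨ d = 5 ∨ d = 6 ∨ d = 8 ∨ d = 11) (h1 : d ≠ 1) :
    mVal d = 2 := by
  have key : ∀ q : ℕ, q.Prime → q ∣ d → q ∣ 5 := fun q hq hqd => hq.dvd_of_dvd_pow (hqd.trans hd)
  rcases hs with rfl|rfl|rfl|rfl|rfl|rfl|rfl|rfl
  · exact absurd rfl h1
  · exact absurd (key 2 Nat.prime_two (by norm_num)) (by norm_num)
  · exact absurd (key 3 Nat.prime_three (by norm_num)) (by norm_num)
  · exact absurd (key 2 Nat.prime_two (by norm_num)) (by norm_num)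
  · rfl
  · exact absurd (key 2 Nat.prime_two (by norm_num)) (by norm_num)
  · exact absurd (key 2 Nat.prime_two (by norm_num)) (by norm_num)
  · exact absurd (key 11 (by norm_num) (by norm_num)) (by norm_num)

lemma val11 {d n : ℕ} (hd : d ∣ 11 ^ n)
    (hs : d = 1 ∨ d = 2 ∨ d = 3 ∨ d = 4 ∨ d = 5 ∨ d = 6 ∨ d = 8 ∨ d = 11) (h1 : d ≠ 1) :
    mVal d = 1 := by
  have key : ∀ q : ℕ, q.Prime → q ∣ d → q ∣ 11 := fun q hq hqd => hq.dvd_of_dvd_pow (hqd.trans hd)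
  rcases hs with rfl|rfl|rfl|rfl|rfl|rfl|rfl|rfl
  · exact absurd rfl h1
  · exact absurd (key 2 Nat.prime_two (by norm_num)) (by norm_num)
  · exact absurd (key 3 Nat.prime_three (by norm_num)) (by norm_num)
  · exact absurd (key 2 Nat.prime_two (by norm_num)) (by norm_num)
  · exact absurd (key 5 (by norm_num) (by norm_num)) (by norm_num)
  · exact absurd (key 2 Nat.prime_two (by norm_num)) (by norm_num)
  · exact absurd (key 2 Nat.prime_two (by norm_num)) (by norm_num)
  · rfl

lemma val2 {d n : ℕ} (hd : d ∣ 2 ^ n)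
    (hs : d = 1 ∨ d = 2 ∨ d = 3 ∨ d = 4 ∨ d = 5 ∨ d = 6 ∨ d = 8 ∨ d = 11) (h1 : d ≠ 1) :
    mVal d * mVal d + 8 = 6 * mVal d := by
  have key : ∀ q : ℕ, q.Prime → q ∣ d → q ∣ 2 := fun q hq hqd => hq.dvd_of_dvd_pow (hqd.trans hd)
  rcases hs with rfl|rfl|rfl|rfl|rfl|rfl|rfl|rfl
  · exact absurd rfl h1
  · rfl
  · exact absurd (key 3 Nat.prime_three (by norm_num)) (by norm_num)
  · rfl
  · exact absurd (key 5 (by norm_num) (by norm_num)) (by norm_num)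
  · exact absurd (key 3 Nat.prime_three (by norm_num)) (by norm_num)
  · rfl
  · exact absurd (key 11 (by norm_num) (by norm_num)) (by norm_num)

lemma card_dvd_shift {H : Type*} [Group H] [Fintype H] [DecidableEq H] {f : H → ℕ} {c k : ℕ}
    (hd : Fintype.card H ∣ ∑ x : H, f x)
    (hpt : ∀ x : H, f x = c + (if x = 1 then k else 0)) :
    Fintype.card H ∣ k := by
  have hs : ∑ x : H, f x = c * Fintype.card H + k := by
    rw [Finset.sum_congr rfl (fun x _ => hpt x), Finset.sum_add_distrib, Finset.sum_const,
      Finset.sum_ite_eq' Finset.univ (1 : H) (fun _ => k)]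
    simp [mul_comm]
  rw [hs] at hd
  exact (Nat.dvd_add_right (dvd_mul_left _ _)).mp hd


lemma odd_sylow_dvd {G : Type*} [Group G] [Fintype G]
    {V : Type*} [AddCommGroup V] [Module ℂ V] [FiniteDimensional ℂ V]
    (ρ : Representation ℂ G V)
    (htr : ∀ g : G, LinearMap.trace ℂ V (ρ g) = (mVal (orderOf g) : ℂ))
    (horder : ∀ g : G, orderOf g = 1 ∨ orderOf g = 2 ∨ orderOf g = 3 ∨ orderOf g = 4 ∨
      orderOf g = 5 ∨ orderOf g = 6 ∨ orderOf g = 8 ∨ orderOf g = 11)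
    (p c : ℕ) [Fact p.Prime] (hc : c ≤ 12)
    (hval : ∀ d n : ℕ, d ∣ p ^ n →
      (d = 1 ∨ d = 2 ∨ d = 3 ∨ d = 4 ∨ d = 5 ∨ d = 6 ∨ d = 8 ∨ d = 11) → d ≠ 1 → mVal d = c) :
    p ^ (Fintype.card G).factorization p ∣ 12 - c := by
  classical
  obtain ⟨P⟩ := (inferInstance : Nonempty (Sylow p G))
  letI : Fintype (P : Subgroup G) := Fintype.ofFinite _
  have hcard : Fintype.card (P : Subgroup G) = p ^ (Fintype.card G).factorization p := by
    rw [← Nat.card_eq_fintype_card, ← Nat.card_eq_fintype_card]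
    exact Sylow.card_eq_multiplicity P
  have hd1 := (sylow_dvd_sums ρ htr (P : Subgroup G)).1
  have hpt : ∀ x : (P : Subgroup G), mVal (orderOf x) = c + (if x = 1 then 12 - c else 0) := by
    intro x
    by_cases hx : x = 1
    · subst hx
      simp only [orderOf_one, if_pos rfl]
      show mVal 1 = c + (12 - c)
      simp only [mVal]
      omega
    · rw [if_neg hx, add_zero]
      have hdvd : orderOf x ∣ p ^ (Fintype.card G).factorization p :=
        hcard ▸ orderOf_dvd_card
      have hset := horder (x : G)
      have hord : orderOf (x : G) = orderOf x :=
        orderOf_injective (P : Subgroup G).subtype (Subgroup.subtype_injective _) x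
      rw [hord] at hset
      exact hval _ _ hdvd hset (fun h => hx (orderOf_eq_one_iff.mp h))
  rw [← hcard]
  exact card_dvd_shift hd1 hpt

lemma two_sylow_dvd {G : Type*} [Group G] [Fintype G]
    {V : Type*} [AddCommGroup V] [Module ℂ V] [FiniteDimensional ℂ V]
    (ρ : Representation ℂ G V)
    (htr : ∀ g : G, LinearMap.trace ℂ V (ρ g) = (mVal (orderOf g) : ℂ))
    (horder : ∀ g : G, orderOf g = 1 ∨ orderOf g = 2 ∨ orderOf g = 3 ∨ orderOf g = 4 ∨
      orderOf g = 5 ∨ orderOf g = 6 ∨ orderOf g = 8 ∨ orderOf g = 11)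
    (hval : ∀ d n : ℕ, d ∣ 2 ^ n →
      (d = 1 ∨ d = 2 ∨ d = 3 ∨ d = 4 ∨ d = 5 ∨ d = 6 ∨ d = 8 ∨ d = 11) → d ≠ 1 →
      mVal d * mVal d + 8 = 6 * mVal d) :
    2 ^ (Fintype.card G).factorization 2 ∣ 80 := by
  classical
  obtain ⟨P⟩ := (inferInstance : Nonempty (Sylow 2 G))
  letI : Fintype (P : Subgroup G) := Fintype.ofFinite _
  have hcard : Fintype.card (P : Subgroup G) = 2 ^ (Fintype.card G).factorization 2 := by
    rw [← Nat.card_eq_fintype_card, ← Nat.card_eq_fintype_card]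
    exact Sylow.card_eq_multiplicity P
  obtain ⟨hd1, hd2⟩ := sylow_dvd_sums ρ htr (P : Subgroup G)
  have hpt : ∀ x : (P : Subgroup G), mVal (orderOf x) * mVal (orderOf x) + 8
      = 6 * mVal (orderOf x) + (if x = 1 then 80 else 0) := by
    intro x
    by_cases hx : x = 1
    · subst hx
      simp only [orderOf_one, if_pos rfl]
      show mVal 1 * mVal 1 + 8 = 6 * mVal 1 + 80
      simp [mVal]
    · rw [if_neg hx, add_zero]
      have hdvd : orderOf x ∣ 2 ^ (Fintype.card G).factorization 2 :=
        hcard ▸ orderOf_dvd_card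
      have hset := horder (x : G)
      have hord : orderOf (x : G) = orderOf x :=
        orderOf_injective (P : Subgroup G).subtype (Subgroup.subtype_injective _) x
      rw [hord] at hset
      exact hval _ _ hdvd hset (fun h => hx (orderOf_eq_one_iff.mp h))
  have hs : (∑ x : (P : Subgroup G), mVal (orderOf x) * mVal (orderOf x))
      + 8 * Fintype.card (P : Subgroup G)
      = 6 * (∑ x : (P : Subgroup G), mVal (orderOf x)) + 80 := by
    have := Finset.sum_congr rfl (fun x (_ : x ∈ Finset.univ) => hpt x)
    rw [Finset.sum_add_distrib, Finset.sum_const, Finset.sum_add_distrib,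
      Finset.sum_ite_eq' Finset.univ (1 : (P : Subgroup G)) (fun _ => 80)] at this
    simp only [Finset.mem_univ, if_pos, smul_eq_mul, Finset.card_univ, ← Finset.mul_sum] at this
    rw [mul_comm] at this
    linarith [this]
  have h80 : Fintype.card (P : Subgroup G) ∣ 6 * (∑ x : (P : Subgroup G), mVal (orderOf x)) + 80 := by
    rw [← hs]
    exact dvd_add hd2 (dvd_mul_left _ _)
  have := (Nat.dvd_add_right (hd1.mul_left 6)).mp h80
  rwa [hcard] at this

/-- If a finite group `G` admits a small Mathieu representation then
`|G| = 2^a₂ · 3^a₃ · 5^a₅ · 11^a₁₁` with `a₂ ≤ 4`, `a₃ ≤ 2`, `a₅ ≤ 1`, `a₁₁ ≤ 1`. -/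
theorem order_of_group_with_small_mathieu_rep (G : Type*) [Group G] [Fintype G]
    (h : HasSmallMathieuRep G) :
    ∃ a2 a3 a5 a11 : ℕ, a2 ≤ 4 ∧ a3 ≤ 2 ∧ a5 ≤ 1 ∧ a11 ≤ 1 ∧
      Fintype.card G = 2 ^ a2 * 3 ^ a3 * 5 ^ a5 * 11 ^ a11 := by
  classical
  obtain ⟨V, _, _, ρ, hdim, horder0, hchar⟩ := h
  haveI : FiniteDimensional ℂ V := FiniteDimensional.of_finrank_pos (by rw [hdim]; norm_num)
  have horder : ∀ g : G, orderOf g = 1 ∨ orderOf g = 2 ∨ orderOf g = 3 ∨ orderOf g = 4 ∨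
      orderOf g = 5 ∨ orderOf g = 6 ∨ orderOf g = 8 ∨ orderOf g = 11 := by
    intro g
    have := horder0 g
    simpa [Set.mem_insert_iff, Set.mem_singleton_iff] using this
  have htr : ∀ g : G, LinearMap.trace ℂ V (ρ g) = (mVal (orderOf g) : ℂ) := by
    intro g
    rw [hchar g]
    rcases horder g with h|h|h|h|h|h|h|h <;> rw [h] <;> norm_num [mathieuCharValue, mVal]
  haveI : Fact (Nat.Prime 5) := ⟨by norm_num⟩
  haveI : Fact (Nat.Prime 11) := ⟨by norm_num⟩
  have h2 := two_sylow_dvd ρ htr horder (fun d n hd hs h1 => val2 hd hs h1)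
  have h3 := odd_sylow_dvd ρ htr horder 3 3 (by norm_num) (fun d n hd hs h1 => val3 hd hs h1)
  have h5 := odd_sylow_dvd ρ htr horder 5 2 (by norm_num) (fun d n hd hs h1 => val5 hd hs h1)
  have h11 := odd_sylow_dvd ρ htr horder 11 1 (by norm_num) (fun d n hd hs h1 => val11 hd hs h1)
  norm_num at h3 h5 h11
  set N := Fintype.card G with hN
  refine ⟨N.factorization 2, N.factorization 3, N.factorization 5, N.factorization 11,
    ?_, ?_, ?_, ?_, ?_⟩
  · by_contra hcon
    push_neg at hcon
    have : (2:ℕ) ^ 5 ∣ 80 := dvd_trans (pow_dvd_pow 2 hcon) h2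
    norm_num at this
  · by_contra hcon
    push_neg at hcon
    have : (3:ℕ) ^ 3 ∣ 9 := dvd_trans (pow_dvd_pow 3 hcon) h3
    norm_num at this
  · by_contra hcon
    push_neg at hcon
    have : (5:ℕ) ^ 2 ∣ 10 := dvd_trans (pow_dvd_pow 5 hcon) h5
    norm_num at this
  · by_contra hcon
    push_neg at hcon
    have : (11:ℕ) ^ 2 ∣ 11 := dvd_trans (pow_dvd_pow 11 hcon) h11
    norm_num at this
  · have hG0 : N ≠ 0 := Fintype.card_ne_zero
    have hsub : N.factorization.support ⊆ ({2, 3, 5, 11} : Finset ℕ) := by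
      intro q hq
      rw [Nat.support_factorization] at hq
      have hqp : q.Prime := Nat.prime_of_mem_primeFactors hq
      have hqd : q ∣ N := Nat.dvd_of_mem_primeFactors hq
      haveI : Fact q.Prime := ⟨hqp⟩
      obtain ⟨g, hg⟩ := exists_prime_orderOf_dvd_card q hqd
      have hmem := horder g
      rw [hg] at hmem
      have hq2 : q = 2 ∨ q = 3 ∨ q = 5 ∨ q = 11 := by
        rcases hmem with rfl|rfl|rfl|rfl|rfl|rfl|rfl|rfl <;>
          first
          | tauto
          | (revert hqp; norm_num)
      simp only [Finset.mem_insert, Finset.mem_singleton]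
      tauto
    have hprod : N = ∏ q ∈ ({2, 3, 5, 11} : Finset ℕ), q ^ N.factorization q := by
      conv_lhs => rw [← Nat.factorization_prod_pow_eq_self hG0]
      exact Finsupp.prod_of_support_subset _ hsub _ (fun i _ => pow_zero i)
    conv_lhs => rw [hprod]
    rw [show ({2, 3, 5, 11} : Finset ℕ) = insert 2 (insert 3 (insert 5 {11})) from rfl]
    rw [Finset.prod_insert (by decide), Finset.prod_insert (by decide),
      Finset.prod_insert (by decide), Finset.prod_singleton]
    ring
end

section
/- No abelian group of order 16 admits a small Mathieu representation. (Explicitly: none of the groups C₁₆, C₈×C₂, C₄×C₄, C₄×C₂×C₂, C₂×C₂×C₂×C₂ admits a small Mathieu representation.) -/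
/-- `G` admits a small Mathieu representation whose invariant subspace has dimension ≥ 3. -/
def HasSmallMathieuRep3 (G : Type*) [Group G] : Prop :=
  ∃ (V : Type) (_ : AddCommGroup V) (_ : Module ℂ V) (ρ : Representation ℂ G V),
    IsSmallMathieuRep ρ ∧ 3 ≤ Module.finrank ℂ ρ.invariants

/-- Condition (4): `G` has a small Mathieu representation `V` with `dim V^G ≥ 3`, the 2-Sylow
subgroups of `G` embed into `S₆`, and `G` is not isomorphic to the dicyclic group `Q₁₂`
(realized in Mathlib as `QuaternionGroup 3`). -/
def Condition4 (G : Type*) [Group G] [Fintype G] : Prop :=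
  HasSmallMathieuRep3 G ∧
    (∀ P : Sylow 2 G, ∃ f : P →* Equiv.Perm (Fin 6), Function.Injective f) ∧
    IsEmpty (G ≃* QuaternionGroup 3)

/-- No abelian group of order 16 admits a small Mathieu representation; in particular none of
`C₁₆`, `C₈×C₂`, `C₄×C₄`, `C₄×C₂×C₂`, `C₂×C₂×C₂×C₂` does. -/
theorem no_abelian_group_of_order_sixteen_has_small_mathieu_rep
    (G : Type*) [CommGroup G] [Fintype G] (hG : Fintype.card G = 16) :
    ¬ HasSmallMathieuRep G := by
  rintro ⟨V, _, _, ρ, hdim, hord, hchar⟩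
  classical
  have hfd : FiniteDimensional ℂ V := by
    apply FiniteDimensional.of_finrank_pos; rw [hdim]; norm_num
  have hord4 : ∀ g : G, orderOf g = 1 ∨ orderOf g = 2 ∨ orderOf g = 4 ∨ orderOf g = 8 := by
    intro g
    have hd : orderOf g ∣ 16 := hG ▸ orderOf_dvd_card
    have h := hord g
    simp only [Set.mem_insert_iff, Set.mem_singleton_iff] at h
    rcases h with h|h|h|h|h|h|h|h <;> rw [h] at hd <;> first
      | (left; exact h) | (right; left; exact h) | (right; right; left; exact h)
      | (right; right; right; exact h) | (exfalso; norm_num at hd)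
  have hexp : ∀ g : G, g ^ 8 = 1 := by
    intro g
    have : orderOf g ∣ 8 := by rcases hord4 g with h|h|h|h <;> rw [h] <;> norm_num
    exact orderOf_dvd_iff_pow_eq_one.mp this
  set T : Finset G := Finset.univ.filter (fun g => orderOf g = 8) with hT
  set c : ℕ := T.card with hc
  have hpt : ∀ g : G, mathieuCharValue (orderOf g)
      = 4 + ((if g = 1 then (8:ℂ) else 0) + (if orderOf g = 8 then (-2:ℂ) else 0)) := by
    intro g
    rcases hord4 g with h|h|h|h
    · have hg1 : g = 1 := orderOf_eq_one_iff.mp h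
      rw [h, hg1]; norm_num [mathieuCharValue]
    · have hg1 : g ≠ 1 := by intro e; rw [e, orderOf_one] at h; norm_num at h
      rw [h]; simp [mathieuCharValue, hg1]
    · have hg1 : g ≠ 1 := by intro e; rw [e, orderOf_one] at h; norm_num at h
      rw [h]; simp [mathieuCharValue, hg1]
    · have hg1 : g ≠ 1 := by intro e; rw [e, orderOf_one] at h; norm_num at h
      rw [h]; simp [mathieuCharValue, hg1]; norm_num
  have hsum : ∑ g : G, mathieuCharValue (orderOf g) = 72 - 2 * (c : ℂ) := by
    rw [Finset.sum_congr rfl (fun g _ => hpt g), Finset.sum_add_distrib,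
      Finset.sum_add_distrib, Finset.sum_const,
      Finset.sum_ite_eq' Finset.univ (1:G) (fun _ => (8:ℂ)), ← Finset.sum_filter,
      Finset.sum_const, Finset.card_univ, hG, ← hT, ← hc]
    simp only [Finset.mem_univ, if_true, nsmul_eq_mul]
    push_cast
    ring
  -- invariants dimension
  haveI : Invertible ((Fintype.card G : ℂ)) := by
    apply invertibleOfNonzero
    rw [hG]; norm_num
  have havg : ⅟(Fintype.card G : ℂ) • ∑ g : G, LinearMap.trace ℂ V (ρ g)
      = (Module.finrank ℂ ρ.invariants : ℂ) := by
    rw [← (Representation.isProj_averageMap ρ).trace]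
    simp [Representation.averageMap, GroupAlgebra.average, _root_.map_sum]
  rw [Finset.sum_congr rfl (fun g _ => hchar g), hsum] at havg
  set d : ℕ := Module.finrank ℂ ρ.invariants with hd
  have h16 : (72 : ℂ) - 2 * c = 16 * d := by
    have h2 := congrArg (fun z : ℂ => (Fintype.card G : ℂ) * z) havg
    simp only [smul_eq_mul, ← mul_assoc, mul_invOf_self, one_mul] at h2
    rw [hG] at h2
    push_cast at h2
    linear_combination h2
  have hcle : c ≤ 16 := by
    rw [hc, ← hG, ← Finset.card_univ]
    exact Finset.card_le_univ T
  have hnat : 72 = 16 * d + 2 * c := by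
    have : (72 : ℂ) = 16 * d + 2 * c := by linear_combination h16
    exact_mod_cast this
  have hcval : c = 4 ∨ c = 12 := by omega
  -- group theory side
  set A : Subgroup G := (powMonoidHom 4 : G →* G).ker with hA
  have hmemA : ∀ g : G, g ∈ A ↔ g ^ 4 = 1 := fun g => Iff.rfl
  have hcardA : Nat.card A + c = 16 := by
    have h1 : Nat.card A = (Finset.univ.filter (fun g : G => ¬ orderOf g = 8)).card := by
      rw [Nat.card_eq_fintype_card, Fintype.card_subtype]
      congr 1
      apply Finset.filter_congr
      intro g _
      rcases hord4 g with h|h|h|h <;>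
        simp [hmemA, h, ← orderOf_dvd_iff_pow_eq_one] <;> norm_num [h]
    rw [h1, hc, hT, add_comm, Finset.card_filter_add_card_filter_not,
      Finset.card_univ, hG]
  have hAdvd : Nat.card A ∣ 16 := by
    have := Subgroup.card_subgroup_dvd_card A
    rwa [Nat.card_eq_fintype_card (α := G), hG] at this
  have hA4 : Nat.card A = 4 := by
    rcases hcval with h|h
    · exfalso
      have h12 : Nat.card A = 12 := by omega
      rw [h12] at hAdvd; norm_num at hAdvd
    · omega
  -- the squaring homomorphism
  set f : G →* G := powMonoidHom 2 with hf
  have hker : f.ker ≤ A := by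
    intro g hg
    have h2 : g ^ 2 = 1 := hg
    rw [hmemA, show (4:ℕ) = 2*2 from rfl, pow_mul, h2, one_pow]
  have hrange : f.range ≤ A := by
    rintro _ ⟨g, rfl⟩
    rw [hmemA]
    show (g ^ 2) ^ 4 = 1
    have h8 := hexp g
    rw [show (8:ℕ) = 2*4 from rfl, pow_mul] at h8
    exact h8
  have hcardmul : Nat.card (G ⧸ f.ker) * Nat.card f.ker = 16 := by
    rw [← Subgroup.card_eq_card_quotient_mul_card_subgroup, Nat.card_eq_fintype_card, hG]
  have hqr : Nat.card (G ⧸ f.ker) = Nat.card f.range :=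
    Nat.card_congr (QuotientGroup.quotientKerEquivRange f).toEquiv
  have hrle : Nat.card f.range ≤ 4 := hA4 ▸ Subgroup.card_le_of_le hrange
  have hkle : Nat.card f.ker ≤ 4 := hA4 ▸ Subgroup.card_le_of_le hker
  have hk4 : 4 ≤ Nat.card f.ker := by
    rw [hqr] at hcardmul
    nlinarith [hcardmul, hrle]
  have hkerA : f.ker = A := by
    apply SetLike.ext'
    apply Set.eq_of_subset_of_ncard_le hker _ (Set.toFinite _)
    rw [← Nat.card_coe_set_eq, ← Nat.card_coe_set_eq]
    show Nat.card A ≤ Nat.card f.ker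
    omega
  have htop : A = ⊤ := by
    rw [eq_top_iff]
    intro g _
    have h2 : f g ∈ A := hrange ⟨g, rfl⟩
    rw [← hkerA] at h2
    have h22 : (g ^ 2) ^ 2 = 1 := h2
    rw [hmemA, show (4:ℕ) = 2*2 from rfl, pow_mul]
    exact h22
  rw [htop, Subgroup.card_top, Nat.card_eq_fintype_card, hG] at hA4
  norm_num at hA4
end

section
/- Let G be a finite group admitting a small Mathieu representation V such that dim V^G ≥ 3. Then 11 does not divide the order of G. -/
open Module in

private theorem eleven_aux
    (G : Type*) [Group G] [Fintype G] {V : Type} [AddCommGroup V] [Module ℂ V]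
    (ρ : Representation ℂ G V) (hfr : Module.finrank ℂ V = 12)
    (horders : ∀ g : G, orderOf g ∈ ({1, 2, 3, 4, 5, 6, 8, 11} : Set ℕ))
    (hchar : ∀ g : G, LinearMap.trace ℂ V (ρ g) = mathieuCharValue (orderOf g))
    (hinv : 3 ≤ Module.finrank ℂ ρ.invariants)
    (hdvd : 11 ∣ Fintype.card G) : False := by
  classical
  haveI : Fact (Nat.Prime 11) := ⟨by norm_num⟩
  obtain ⟨g, hg⟩ := exists_prime_orderOf_dvd_card 11 hdvd
  have hFD : FiniteDimensional ℂ V := FiniteDimensional.of_finrank_pos (by rw [hfr]; norm_num)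
  set H := Subgroup.zpowers g with hH
  let ρH : Representation ℂ H V := ρ.comp H.subtype
  have cardH : Fintype.card H = 11 := by rw [Fintype.card_zpowers, hg]
  haveI : Invertible ((Fintype.card H : ℂ)) := invertibleOfNonzero (by rw [cardH]; norm_num)
  -- average formula
  have key : (finrank ℂ ρH.invariants : ℂ)
      = ⅟ (Fintype.card H : ℂ) • ∑ h : H, LinearMap.trace ℂ V (ρH h) := by
    rw [← (Representation.isProj_averageMap ρH).trace]
    simp [Representation.averageMap, GroupAlgebra.average, _root_.map_sum]
  -- compute the sum
  have hval : ∀ h : H, h ≠ 1 → LinearMap.trace ℂ V (ρH h) = 1 := by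
    intro h hne
    have hmem : (h : G) ∈ Subgroup.zpowers g := h.2
    have hdvd' : orderOf (h : G) ∣ 11 := hg ▸ orderOf_dvd_of_mem_zpowers hmem
    have hne1 : (h : G) ≠ 1 := fun e => hne (OneMemClass.coe_eq_one.mp e)
    have ho : orderOf (h : G) = 11 := by
      rcases (Nat.Prime.eq_one_or_self_of_dvd (by norm_num) _ hdvd') with h1 | h11
      · exact absurd (orderOf_eq_one_iff.mp h1) hne1
      · exact h11
    have : ρH h = ρ (h : G) := rfl
    rw [this, hchar, ho]; rfl
  have hone : LinearMap.trace ℂ V (ρH 1) = 12 := by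
    have : ρH (1 : H) = ρ (1 : G) := by simp [ρH]
    rw [this, hchar, orderOf_one]; rfl
  have hsum : ∑ h : H, LinearMap.trace ℂ V (ρH h) = 22 := by
    rw [← Finset.sum_erase_add _ _ (Finset.mem_univ (1 : H)), hone]
    have : ∑ h ∈ Finset.univ.erase (1 : H), LinearMap.trace ℂ V (ρH h)
        = (Finset.univ.erase (1 : H)).card • (1 : ℂ) :=
      Finset.sum_eq_card_nsmul fun h hh => hval h (Finset.ne_of_mem_erase hh)
    rw [this, Finset.card_erase_of_mem (Finset.mem_univ _), Finset.card_univ, cardH]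
    norm_num
  rw [hsum] at key
  have h2 : (finrank ℂ ρH.invariants : ℂ) = 2 := by
    rw [key, invOf_eq_inv _, smul_eq_mul, cardH]
    norm_num
  have h2' : finrank ℂ ρH.invariants = 2 := by exact_mod_cast h2
  have hle : ρ.invariants ≤ ρH.invariants := by
    intro v hv h
    exact hv (h : G)
  have := Submodule.finrank_mono hle
  omega

/-- If a finite group `G` admits a small Mathieu representation `V` with `dim V^G ≥ 3`,
then `11` does not divide `|G|`. -/
theorem eleven_not_dvd_of_small_mathieu_rep_with_three_invariants
    (G : Type*) [Group G] [Fintype G] (h : HasSmallMathieuRep3 G) :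
    ¬ (11 ∣ Fintype.card G) := by
  intro hdvd
  obtain ⟨V, _, _, ρ, ⟨hfr, horders, hchar⟩, hinv⟩ := h
  exact eleven_aux G ρ hfr horders hchar hinv hdvd
end

section
/- Let G be a finite group admitting a small Mathieu representation, and assume that a 2-Sylow subgroup of G is embeddable into the symmetric group S₆. Then G has no element of order 8, and the 2-Sylow subgroups of G have order at most 8. -/
open Equiv

theorem Equiv.Perm.orderOf_dvd_lcm_Icc {α : Type*} [Fintype α] [DecidableEq α] (σ : Perm α) :
    orderOf σ ∣ (Finset.Icc 1 (Fintype.card α)).lcm id := by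
  rw [← σ.lcm_cycleType, Multiset.lcm_dvd]
  intro n hn
  refine Finset.dvd_lcm (Finset.mem_Icc.2 ⟨?_, ?_⟩)
  · exact (Perm.one_lt_of_mem_cycleType hn).le
  · exact (Perm.le_card_support_of_mem_cycleType hn).trans σ.support.card_le_univ

theorem Equiv.Perm.orderOf_ne_eight (σ : Perm (Fin 6)) : orderOf σ ≠ 8 := by
  intro h
  have h60 : orderOf σ ∣ 60 := by
    simpa [show (Finset.Icc 1 6).lcm id = 60 by decide] using σ.orderOf_dvd_lcm_Icc
  rw [h] at h60
  norm_num at h60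

theorem orderOf_ne_eight_of_sylow_two_embeds_perm_fin_six {G : Type*} [Group G] [Finite G]
    (hsyl : ∀ P : Sylow 2 G, ∃ f : P →* Perm (Fin 6), Function.Injective f) (g : G) :
    orderOf g ≠ 8 := by
  intro hg
  have h2 : IsPGroup 2 (Subgroup.zpowers g) :=
    IsPGroup.of_card (n := 3) (by rw [Nat.card_zpowers, hg]; norm_num)
  obtain ⟨P, hP⟩ := h2.exists_le_sylow
  obtain ⟨f, hf⟩ := hsyl P
  refine (f ⟨g, hP (Subgroup.mem_zpowers g)⟩).orderOf_ne_eight ?_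
  rw [orderOf_injective f hf, Subgroup.orderOf_mk, hg]

theorem Representation.card_dvd_finrank_sub_of_character_eq {H V : Type*} [Group H] [Finite H]
    [AddCommGroup V] [Module ℂ V] [FiniteDimensional ℂ V] (ρ : Representation ℂ H V) (c : ℕ)
    (hchar : ∀ h ≠ 1, ρ.character h = c) :
    (Nat.card H : ℤ) ∣ Module.finrank ℂ V - c := by
  classical
  have := Fintype.ofFinite H
  have hn : (Nat.card H : ℂ) ≠ 0 := by exact_mod_cast Nat.card_pos.ne'
  have := invertibleOfNonzero hn
  have hsum : ∑ h : H, ρ.character h = Module.finrank ℂ V + (Nat.card H - 1) * c := by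
    rw [← Finset.add_sum_erase _ _ (Finset.mem_univ 1), ρ.char_one,
      Finset.sum_congr rfl fun h hh => hchar h (Finset.ne_of_mem_erase hh), Finset.sum_const,
      Finset.card_erase_of_mem (Finset.mem_univ 1), Finset.card_univ, Fintype.card_eq_nat_card,
      nsmul_eq_mul, Nat.cast_pred Nat.card_pos]
  have havg := ρ.card_inv_mul_sum_char_eq_finrank
  rw [hsum, inv_mul_eq_iff_eq_mul₀ hn] at havg
  refine ⟨Module.finrank ℂ ρ.invariants - c, ?_⟩
  have : (Module.finrank ℂ V : ℂ) - c = Nat.card H * (Module.finrank ℂ ρ.invariants - c) := by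
    linear_combination havg
  exact_mod_cast this

theorem mathieuCharValue_two_pow {j : ℕ}
    (hmem : 2 ^ j ∈ ({1, 2, 3, 4, 5, 6, 8, 11} : Set ℕ)) (h1 : 2 ^ j ≠ 1) (h8 : 2 ^ j ≠ 8) :
    mathieuCharValue (2 ^ j) = 4 := by
  have hj : j < 4 := by
    by_contra! hj
    have : 2 ^ 4 ≤ 2 ^ j := Nat.pow_le_pow_right two_pos hj
    simp only [Set.mem_insert_iff, Set.mem_singleton_iff] at hmem
    omega
  interval_cases j <;> simp_all [mathieuCharValue]

theorem IsSmallMathieuRep.trace_eq_four_of_orderOf_eq_two_pow {G V : Type*} [Group G]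
    [AddCommGroup V] [Module ℂ V] {ρ : Representation ℂ G V} (hρ : IsSmallMathieuRep ρ) {g : G}
    (hg : g ≠ 1) (h8 : orderOf g ≠ 8) {j : ℕ} (hj : orderOf g = 2 ^ j) :
    LinearMap.trace ℂ V (ρ g) = 4 := by
  have h1 : orderOf g ≠ 1 := by rwa [Ne, orderOf_eq_one_iff]
  have hmem := hρ.2.1 g
  rw [hj] at h1 hmem h8
  rw [hρ.2.2, hj, mathieuCharValue_two_pow hmem h1 h8]

/-- If a finite group `G` admits a small Mathieu representation and its 2-Sylow subgroups embed
into `S₆`, then `G` has no element of order 8 and its 2-Sylow subgroups have order at most 8. -/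
theorem sylow_two_small_of_small_mathieu_rep
    (G : Type*) [Group G] [Fintype G] (h : HasSmallMathieuRep G)
    (hsyl : ∀ P : Sylow 2 G, ∃ f : P →* Equiv.Perm (Fin 6), Function.Injective f) :
    (∀ g : G, orderOf g ≠ 8) ∧ ∀ P : Sylow 2 G, Nat.card P ≤ 8 := by
  obtain ⟨V, _, _, ρ, hρ⟩ := h
  have : FiniteDimensional ℂ V := .of_finrank_pos (by rw [hρ.1]; norm_num)
  have no8 := orderOf_ne_eight_of_sylow_two_embeds_perm_fin_six hsyl
  refine ⟨no8, fun P => Nat.le_of_dvd (by norm_num) ?_⟩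
  have hfour (p : P) (hp : p ≠ 1) :
      Representation.character (ρ.comp (P : Subgroup G).subtype) p = (4 : ℕ) := by
    obtain ⟨j, hj⟩ := (IsPGroup.iff_orderOf.1 P.isPGroup') p
    rw [← Subgroup.orderOf_coe] at hj
    exact_mod_cast hρ.trace_eq_four_of_orderOf_eq_two_pow (by simpa using hp) (no8 p) hj
  have hdvd := Representation.card_dvd_finrank_sub_of_character_eq _ 4 hfour
  rw [hρ.1] at hdvd
  exact Int.natCast_dvd_natCast.1 hdvd
end

section
/- Let G be a finite group satisfying Condition (4). Then every element g ∈ G has order at most 6, and the order of G equals 2^{a₂}·3^{a₃}·5^{a₅} for some non-negative integers a₂ ≤ 3, a₃ ≤ 2, a₅ ≤ 1. -/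
open Module

section Aux

/-- If `8` divides the lcm of a multiset of naturals, it divides one of its members. -/
lemma eight_dvd_mem_of_dvd_lcm (s : Multiset ℕ) (hd : (8 : ℕ) ∣ s.lcm) :
    ∃ a ∈ s, (8 : ℕ) ∣ a := by
  induction s using Multiset.induction_on with
  | empty =>
    rw [Multiset.lcm_zero] at hd
    exact absurd (Nat.le_of_dvd one_pos hd) (by norm_num)
  | cons a s ih =>
    rw [Multiset.lcm_cons] at hd
    rcases eq_or_ne a 0 with rfl | ha
    · exact ⟨0, Multiset.mem_cons_self _ _, dvd_zero _⟩
    rcases eq_or_ne s.lcm 0 with h0 | hs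
    · obtain ⟨b, hb, hb8⟩ := ih (h0 ▸ dvd_zero 8)
      exact ⟨b, Multiset.mem_cons_of_mem hb, hb8⟩
    · rw [lcm_eq_nat_lcm] at hd
      have h8 : (2 : ℕ) ^ 3 ∣ Nat.lcm a s.lcm := by norm_num; exact hd
      rw [Nat.Prime.pow_dvd_iff_le_factorization Nat.prime_two (Nat.lcm_ne_zero ha hs),
        Nat.factorization_lcm ha hs, Finsupp.sup_apply, le_sup_iff] at h8
      rcases h8 with h8 | h8
      · refine ⟨a, Multiset.mem_cons_self _ _, ?_⟩
        have := (Nat.Prime.pow_dvd_iff_le_factorization Nat.prime_two ha).mpr h8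
        norm_num at this; exact this
      · obtain ⟨b, hb, hb8⟩ := ih (by
          have := (Nat.Prime.pow_dvd_iff_le_factorization Nat.prime_two hs).mpr h8
          norm_num at this; exact this)
        exact ⟨b, Multiset.mem_cons_of_mem hb, hb8⟩

/-- There is no element of order 8 in `S₆`. -/
lemma no_order_eight_in_S6 (σ : Equiv.Perm (Fin 6)) : orderOf σ ≠ 8 := by
  intro h
  have hlcm : σ.cycleType.lcm = 8 := by rw [Equiv.Perm.lcm_cycleType, h]
  obtain ⟨a, hmem, hdvd8⟩ := eight_dvd_mem_of_dvd_lcm σ.cycleType (by rw [hlcm])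
  have h2le : 2 ≤ a := Equiv.Perm.two_le_of_mem_cycleType hmem
  have hle6 : a ≤ 6 := by
    have h1 : a ≤ σ.cycleType.sum :=
      Multiset.single_le_sum (fun x _ => Nat.zero_le x) a hmem
    rw [Equiv.Perm.sum_cycleType] at h1
    have h2 : σ.support.card ≤ 6 := by
      have := Finset.card_le_univ σ.support
      simpa using this
    omega
  have := Nat.le_of_dvd (by omega) hdvd8
  omega

variable {V : Type} [AddCommGroup V] [Module ℂ V]

/-- The averaged character equals the dimension of the invariants (cleared of denominators). -/
lemma sum_trace_eq_card_mul_finrank {H : Type*} [Group H] [Fintype H]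
    [FiniteDimensional ℂ V] (ρ : Representation ℂ H V) :
    ∑ h : H, LinearMap.trace ℂ V (ρ h) =
      (Fintype.card H : ℂ) * (finrank ℂ ρ.invariants : ℂ) := by
  haveI : Invertible (Fintype.card H : ℂ) :=
    invertibleOfNonzero (by exact_mod_cast Fintype.card_ne_zero)
  have h1 : LinearMap.trace ℂ V ρ.averageMap = (finrank ℂ ρ.invariants : ℂ) :=
    (Representation.isProj_averageMap ρ).trace
  have h2 : ρ.averageMap = ⅟ (Fintype.card H : ℂ) • ∑ h : H, ρ h := by
    simp only [Representation.averageMap, GroupAlgebra.average, map_smul, map_sum,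
      MonoidAlgebra.of_apply, Representation.asAlgebraHom_single, one_smul]
  rw [h2, map_smul, map_sum, invOf_smul_eq_iff, smul_eq_mul] at h1
  exact h1

/-- The key counting identity: if the character takes the value 12 at `1` and the constant
value `c` elsewhere, then `|H| * dim V^H + c = 12 + |H| * c`. -/
lemma card_mul_finrank_invariants {H : Type*} [Group H] [Fintype H]
    [FiniteDimensional ℂ V] (ρ : Representation ℂ H V) (c : ℕ)
    (htr1 : LinearMap.trace ℂ V (ρ 1) = 12)
    (htr : ∀ h : H, h ≠ 1 → LinearMap.trace ℂ V (ρ h) = (c : ℂ)) :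
    Fintype.card H * finrank ℂ ρ.invariants + c = 12 + Fintype.card H * c := by
  classical
  have hsum : ∑ h : H, LinearMap.trace ℂ V (ρ h)
      = ∑ h : H, ((c : ℂ) + if h = 1 then (12 - c : ℂ) else 0) := by
    refine Finset.sum_congr rfl fun h _ => ?_
    by_cases hh : h = 1
    · subst hh
      rw [htr1, if_pos rfl]
      ring
    · rw [htr h hh, if_neg hh]
      ring
  rw [sum_trace_eq_card_mul_finrank] at hsum
  rw [Finset.sum_add_distrib, Finset.sum_const, Finset.sum_ite_eq' Finset.univ (1 : H)
    (fun _ => (12 - c : ℂ)), if_pos (Finset.mem_univ _)] at hsum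
  have hcast : ((Fintype.card H * finrank ℂ ρ.invariants + c : ℕ) : ℂ)
      = ((12 + Fintype.card H * c : ℕ) : ℂ) := by
    push_cast
    rw [hsum]
    simp only [nsmul_eq_mul, Finset.card_univ]
    ring
  exact_mod_cast hcast

end Aux

/-- If a finite group `G` satisfies Condition (4), then every element of `G` has order at most 6
and `|G| = 2^a₂ · 3^a₃ · 5^a₅` with `a₂ ≤ 3`, `a₃ ≤ 2`, `a₅ ≤ 1`. -/
theorem order_bound_of_condition4 (G : Type*) [Group G] [Fintype G] (h : Condition4 G) :
    (∀ g : G, orderOf g ≤ 6) ∧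
      ∃ a2 a3 a5 : ℕ, a2 ≤ 3 ∧ a3 ≤ 2 ∧ a5 ≤ 1 ∧
        Fintype.card G = 2 ^ a2 * 3 ^ a3 * 5 ^ a5 := by
  classical
  obtain ⟨⟨V, _, _, ρ, ⟨hdim, horders, htrace⟩, hinv⟩, hsylow, -⟩ := h
  haveI : FiniteDimensional ℂ V := Module.finite_of_finrank_pos (by omega)
  -- No element of order 8 (via embedding of 2-Sylow subgroups in S₆)
  have no8 : ∀ g : G, orderOf g ≠ 8 := by
    intro g hg
    have hpK : IsPGroup 2 (Subgroup.zpowers g) := by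
      apply IsPGroup.of_card (p := 2) (n := 3)
      rw [Nat.card_zpowers, hg]
      norm_num
    obtain ⟨Q, hQ⟩ := hpK.exists_le_sylow
    have hgQ : g ∈ (Q : Subgroup G) := hQ (Subgroup.mem_zpowers g)
    obtain ⟨f, hf⟩ := hsylow Q
    have h1 : orderOf ((Q : Subgroup G).subtype ⟨g, hgQ⟩) = 8 := hg
    rw [orderOf_injective (Q : Subgroup G).subtype (Q : Subgroup G).subtype_injective] at h1
    have h2 := orderOf_injective f hf ⟨g, hgQ⟩
    exact no_order_eight_in_S6 _ (h2.trans h1)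
  -- No element of order 11 (otherwise the invariants would be at most 2-dimensional)
  have no11 : ∀ g : G, orderOf g ≠ 11 := by
    intro g hg
    set H := Subgroup.zpowers g with hH
    have hcard : Fintype.card H = 11 := by rw [Fintype.card_zpowers, hg]
    set ρH : Representation ℂ H V := ρ.comp H.subtype with hρH
    have h1 : LinearMap.trace ℂ V (ρH 1) = 12 := by
      show LinearMap.trace ℂ V (ρ ((1 : H) : G)) = 12
      have h1' : ((1 : H) : G) = 1 := rfl
      rw [htrace, h1', orderOf_one]; rfl
    have h2 : ∀ x : H, x ≠ 1 → LinearMap.trace ℂ V (ρH x) = ((1 : ℕ) : ℂ) := by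
      intro x hx
      show LinearMap.trace ℂ V (ρ (x : G)) = ((1 : ℕ) : ℂ)
      have hox : orderOf (x : G) = orderOf x :=
        orderOf_injective H.subtype H.subtype_injective x
      have hdvd : orderOf x ∣ 11 := hcard ▸ orderOf_dvd_card
      rcases (Nat.Prime.eq_one_or_self_of_dvd (by norm_num) _ hdvd) with h1' | h11
      · exact absurd (orderOf_eq_one_iff.mp h1') hx
      · rw [htrace, hox, h11]; norm_num [mathieuCharValue]
    have key := card_mul_finrank_invariants ρH 1 h1 h2
    rw [hcard] at key
    have hle : ρ.invariants ≤ ρH.invariants := fun x hx h => hx (h : G)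
    have := Submodule.finrank_mono hle
    omega
  -- orders at most 6
  have hord6 : ∀ g : G, orderOf g ≤ 6 := by
    intro g
    have hm := horders g
    simp only [Set.mem_insert_iff, Set.mem_singleton_iff] at hm
    rcases hm with h | h | h | h | h | h | h | h
    all_goals first
      | omega
      | (exact absurd h (no8 g))
      | (exact absurd h (no11 g))
  refine ⟨hord6, ?_⟩
  set n := Fintype.card G with hn
  have hn0 : n ≠ 0 := Fintype.card_ne_zero
  -- Sylow bound helper
  have sylow_bound : ∀ (p c : ℕ), p.Prime → c ≤ 12 →
      (∀ m : ℕ, m ≠ 1 → m ≠ 8 → m ∈ ({1, 2, 3, 4, 5, 6, 8, 11} : Set ℕ) →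
        m ∣ p ^ (Nat.factorization n p) → mathieuCharValue m = (c : ℂ)) →
      p ^ (Nat.factorization n p) ∣ (12 - c) := by
    intro p c hp hc hval
    haveI : Fact p.Prime := ⟨hp⟩
    obtain ⟨P⟩ : Nonempty (Sylow p G) := inferInstance
    haveI : Fintype (P : Subgroup G) := Fintype.ofFinite _
    have hcardP : Fintype.card (P : Subgroup G) = p ^ (Nat.factorization n p) := by
      rw [← Nat.card_eq_fintype_card, hn, ← Nat.card_eq_fintype_card (α := G)]
      exact P.card_eq_multiplicity
    set ρP : Representation ℂ (P : Subgroup G) V := ρ.comp (P : Subgroup G).subtype with hρP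
    have h1 : LinearMap.trace ℂ V (ρP 1) = 12 := by
      show LinearMap.trace ℂ V (ρ (((1 : (P : Subgroup G))) : G)) = 12
      have h1' : (((1 : (P : Subgroup G))) : G) = 1 := rfl
      rw [htrace, h1', orderOf_one]; rfl
    have h2 : ∀ x : (P : Subgroup G), x ≠ 1 → LinearMap.trace ℂ V (ρP x) = (c : ℂ) := by
      intro x hx
      show LinearMap.trace ℂ V (ρ (x : G)) = (c : ℂ)
      have hox : orderOf (x : G) = orderOf x :=
        orderOf_injective (P : Subgroup G).subtype (P : Subgroup G).subtype_injective x
      have hne1 : orderOf (x : G) ≠ 1 := by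
        rw [hox]
        simp only [ne_eq, orderOf_eq_one_iff]
        exact hx
      have hdvd : orderOf (x : G) ∣ p ^ (Nat.factorization n p) := by
        rw [hox, ← hcardP]
        exact orderOf_dvd_card
      rw [htrace]
      exact hval _ hne1 (no8 _) (horders _) hdvd
    have key := card_mul_finrank_invariants ρP c h1 h2
    rw [hcardP] at key
    refine ⟨finrank ℂ ρP.invariants - c, ?_⟩
    set q := p ^ (Nat.factorization n p)
    set d := finrank ℂ ρP.invariants
    have hdc : c ≤ d := by
      by_contra hcd
      push_neg at hcd
      have : q * d < q * c :=
        Nat.mul_lt_mul_of_pos_left hcd (Nat.pos_of_ne_zero (pow_ne_zero _ hp.pos.ne'))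
      omega
    calc 12 - c = q * d + c - c - q * c := by omega
    _ = q * d - q * c := by omega
    _ = q * (d - c) := by rw [Nat.mul_sub]
  -- the three prime-power bounds
  have hb2 : 2 ^ (Nat.factorization n 2) ∣ 8 := by
    have := sylow_bound 2 4 (by norm_num) (by norm_num) ?_
    · simpa using this
    · intro m h1 h8 hset hdvd
      simp only [Set.mem_insert_iff, Set.mem_singleton_iff] at hset
      have hodd : ∀ q : ℕ, q.Prime → q ∣ m → q ∣ 2 := fun q hq hqm =>
        hq.dvd_of_dvd_pow (hqm.trans hdvd)
      rcases hset with h | h | h | h | h | h | h | h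
      · exact absurd h h1
      · rw [h]; rfl
      · exact absurd (hodd 3 (by norm_num) (dvd_of_eq h.symm)) (by norm_num)
      · rw [h]; rfl
      · exact absurd (hodd 5 (by norm_num) (dvd_of_eq h.symm)) (by norm_num)
      · exact absurd (hodd 3 (by norm_num) (h ▸ (by norm_num : (3:ℕ) ∣ 6))) (by norm_num)
      · exact absurd h h8
      · exact absurd (hodd 11 (by norm_num) (dvd_of_eq h.symm)) (by norm_num)
  have hb3 : 3 ^ (Nat.factorization n 3) ∣ 9 := by
    have := sylow_bound 3 3 (by norm_num) (by norm_num) ?_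
    · simpa using this
    · intro m h1 h8 hset hdvd
      simp only [Set.mem_insert_iff, Set.mem_singleton_iff] at hset
      have hodd : ∀ q : ℕ, q.Prime → q ∣ m → q ∣ 3 := fun q hq hqm =>
        hq.dvd_of_dvd_pow (hqm.trans hdvd)
      rcases hset with h | h | h | h | h | h | h | h
      · exact absurd h h1
      · exact absurd (hodd 2 (by norm_num) (dvd_of_eq h.symm)) (by norm_num)
      · rw [h]; rfl
      · exact absurd (hodd 2 (by norm_num) (h ▸ (by norm_num : (2:ℕ) ∣ 4))) (by norm_num)
      · exact absurd (hodd 5 (by norm_num) (dvd_of_eq h.symm)) (by norm_num)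
      · exact absurd (hodd 2 (by norm_num) (h ▸ (by norm_num : (2:ℕ) ∣ 6))) (by norm_num)
      · exact absurd h h8
      · exact absurd (hodd 11 (by norm_num) (dvd_of_eq h.symm)) (by norm_num)
  have hb5 : 5 ^ (Nat.factorization n 5) ∣ 10 := by
    have := sylow_bound 5 2 (by norm_num) (by norm_num) ?_
    · simpa using this
    · intro m h1 h8 hset hdvd
      simp only [Set.mem_insert_iff, Set.mem_singleton_iff] at hset
      have hodd : ∀ q : ℕ, q.Prime → q ∣ m → q ∣ 5 := fun q hq hqm =>
        hq.dvd_of_dvd_pow (hqm.trans hdvd)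
      rcases hset with h | h | h | h | h | h | h | h
      · exact absurd h h1
      · exact absurd (hodd 2 (by norm_num) (dvd_of_eq h.symm)) (by norm_num)
      · exact absurd (hodd 3 (by norm_num) (dvd_of_eq h.symm)) (by norm_num)
      · exact absurd (hodd 2 (by norm_num) (h ▸ (by norm_num : (2:ℕ) ∣ 4))) (by norm_num)
      · rw [h]; rfl
      · exact absurd (hodd 2 (by norm_num) (h ▸ (by norm_num : (2:ℕ) ∣ 6))) (by norm_num)
      · exact absurd h h8
      · exact absurd (hodd 11 (by norm_num) (dvd_of_eq h.symm)) (by norm_num)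
  refine ⟨Nat.factorization n 2, Nat.factorization n 3, Nat.factorization n 5, ?_, ?_, ?_, ?_⟩
  · by_contra hcon
    push_neg at hcon
    have : (2:ℕ) ^ 4 ≤ 2 ^ (Nat.factorization n 2) := Nat.pow_le_pow_right (by norm_num) hcon
    have := Nat.le_of_dvd (by norm_num) hb2
    omega
  · by_contra hcon
    push_neg at hcon
    have : (3:ℕ) ^ 3 ≤ 3 ^ (Nat.factorization n 3) := Nat.pow_le_pow_right (by norm_num) hcon
    have := Nat.le_of_dvd (by norm_num) hb3
    omega
  · by_contra hcon
    push_neg at hcon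
    have : (5:ℕ) ^ 2 ≤ 5 ^ (Nat.factorization n 5) := Nat.pow_le_pow_right (by norm_num) hcon
    have := Nat.le_of_dvd (by norm_num) hb5
    omega
  · -- the product formula
    have hsupp : n.factorization.support ⊆ ({2, 3, 5} : Finset ℕ) := by
      intro p hp
      rw [Nat.support_factorization] at hp
      obtain ⟨hpp, hpn, -⟩ := Nat.mem_primeFactors.mp hp
      haveI : Fact p.Prime := ⟨hpp⟩
      obtain ⟨g, hg⟩ := exists_prime_orderOf_dvd_card p hpn
      have hm := horders g
      rw [hg] at hm
      simp only [Set.mem_insert_iff, Set.mem_singleton_iff] at hm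
      have h8' := no8 g
      have h11' := no11 g
      rw [hg] at h8' h11'
      simp only [Finset.mem_insert, Finset.mem_singleton]
      rcases hm with h | h | h | h | h | h | h | h
      · exact absurd (h ▸ hpp) (by norm_num)
      · exact Or.inl h
      · exact Or.inr (Or.inl h)
      · exact absurd (h ▸ hpp) (by norm_num)
      · exact Or.inr (Or.inr h)
      · exact absurd (h ▸ hpp) (by norm_num)
      · exact absurd h h8'
      · exact absurd h h11'
    have hprod0 : n = ∏ p ∈ n.factorization.support, p ^ n.factorization p := by
      conv_lhs => rw [← Nat.factorization_prod_pow_eq_self hn0]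
      rfl
    have hprod : n = ∏ p ∈ ({2, 3, 5} : Finset ℕ), p ^ n.factorization p :=
      hprod0.trans (Finset.prod_subset hsupp (fun x _ hx => by
        rw [Finsupp.notMem_support_iff.mp hx, pow_zero]))
    have hps : (∏ p ∈ ({2, 3, 5} : Finset ℕ), p ^ n.factorization p)
        = 2 ^ n.factorization 2 * 3 ^ n.factorization 3 * 5 ^ n.factorization 5 := by
      rw [Finset.prod_insert (by decide), Finset.prod_insert (by decide),
        Finset.prod_singleton, mul_assoc]
    exact hprod.trans hps
end

section
/- The dicyclic group Q₁₂ of order 12 admits a small Mathieu representation V with dim V^{Q₁₂} = 4. -/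
/-!
Write `Q₁₂ = ⟨a, x⟩` with `a` of order 6. For a character `ψ` of the cyclic subgroup `⟨a⟩`, the
induced representation is monomial of dimension 2, with character `ψ(aⁱ) + ψ(a⁻ⁱ)` on `⟨a⟩` and
`0` off it. For a faithful `ψ`, the sum `V` of four trivial representations and the induced
representations of `ψ, ψ², ψ³, ψ⁴` has character `12, 4, 3, 1` on the elements `aⁱ` of order
`1, 2, 3, 6` and `4` on the six elements of order 4, so it is a small Mathieu representation.
Averaging this character over the group gives `dim V^{Q₁₂} = (12 + 4 + 2·3 + 2·1 + 6·4) / 12 = 4`.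
-/

open QuaternionGroup Representation

namespace AddChar

variable {m : ℕ} [NeZero m] {M : Type*} [Monoid M]

theorem apply_eq_pow_val (ψ : AddChar (ZMod m) M) (i : ZMod m) : ψ i = ψ 1 ^ i.val := by
  rw [← map_nsmul_eq_pow, nsmul_one, ZMod.natCast_zmod_val]

theorem map_neg_eq_pow_pred (ψ : AddChar (ZMod m) M) (i : ZMod m) : ψ (-i) = ψ i ^ (m - 1) := by
  have hneg : -i = (m - 1) • i := by
    rw [eq_comm, eq_neg_iff_add_eq_zero, ← succ_nsmul, Nat.sub_add_cancel NeZero.one_le,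
      nsmul_eq_mul, ZMod.natCast_self, zero_mul]
  rw [hneg, map_nsmul_eq_pow]

end AddChar

theorem Representation.trace_prod_apply {k G V W : Type*} [CommRing k] [Monoid G]
    [AddCommGroup V] [Module k V] [Module.Free k V] [Module.Finite k V]
    [AddCommGroup W] [Module k W] [Module.Free k W] [Module.Finite k W]
    (ρV : Representation k G V) (ρW : Representation k G W) (g : G) :
    LinearMap.trace k _ (ρV.prod ρW g) =
      LinearMap.trace k _ (ρV g) + LinearMap.trace k _ (ρW g) :=
  LinearMap.trace_prodMap' _ _

theorem IsSmallMathieuRep.finrank_invariants {G : Type} [Group G] [Fintype G] {V : Type}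
    [AddCommGroup V] [Module ℂ V] {ρ : Representation ℂ G V} (h : IsSmallMathieuRep ρ) :
    (Module.finrank ℂ ρ.invariants : ℂ) =
      (Nat.card G : ℂ)⁻¹ * ∑ g : G, mathieuCharValue (orderOf g) := by
  have : FiniteDimensional ℂ V := Module.finite_of_finrank_eq_succ h.1
  have : Invertible (Nat.card G : ℂ) := invertibleOfNonzero (by simp)
  have average := FDRep.average_char_eq_finrank_invariants (FDRep.of ρ)
  rw [FDRep.of_ρ'] at average
  simp [← average, FDRep.character, h.2.2]

namespace QuaternionGroup

def sumEquiv (n : ℕ) : ZMod (2 * n) ⊕ ZMod (2 * n) ≃ QuaternionGroup n where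
  toFun := Sum.elim a xa
  invFun
    | a i => .inl i
    | xa i => .inr i
  left_inv := by rintro (i | i) <;> rfl
  right_inv := by rintro (i | i) <;> rfl

variable {n : ℕ} {R : Type*} [CommRing R]

/-- The representation induced from the character `ψ` of `⟨a 1⟩`, in the basis `e, xa 0 • e`. -/
def inducedMatrix (ψ : AddChar (ZMod (2 * n)) R) :
    QuaternionGroup n →* Matrix (Fin 2) (Fin 2) R where
  toFun
    | a i => !![ψ i, 0; 0, ψ (-i)]
    | xa i => !![0, ψ (n - i); ψ i, 0]
  map_one' := by rw [one_def]; simp [Matrix.one_fin_two]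
  map_mul' := by
    have h2n : 2 * (n : ZMod (2 * n)) = 0 := by exact_mod_cast ZMod.natCast_self (2 * n)
    rintro (i | i) (j | j) <;> ext r c <;> fin_cases r <;> fin_cases c <;>
      simp [← AddChar.map_add_eq_mul] <;> congr 1 <;> first | ring1 | linear_combination -h2n

def inducedRep (ψ : AddChar (ZMod (2 * n)) R) :
    Representation R (QuaternionGroup n) (Fin 2 → R) :=
  Matrix.toLinAlgEquiv'.toMonoidHom.comp (inducedMatrix ψ)

theorem trace_inducedRep (ψ : AddChar (ZMod (2 * n)) R) (g : QuaternionGroup n) :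
    LinearMap.trace R _ (inducedRep ψ g) = (inducedMatrix ψ g).trace :=
  Matrix.trace_toLin'_eq _

theorem trace_inducedRep_a (ψ : AddChar (ZMod (2 * n)) R) (i : ZMod (2 * n)) :
    LinearMap.trace R _ (inducedRep ψ (a i)) = ψ i + ψ (-i) :=
  (trace_inducedRep ψ _).trans (Matrix.trace_fin_two_of ..)

theorem trace_inducedRep_xa (ψ : AddChar (ZMod (2 * n)) R) (i : ZMod (2 * n)) :
    LinearMap.trace R _ (inducedRep ψ (xa i)) = 0 :=
  (trace_inducedRep ψ _).trans ((Matrix.trace_fin_two_of ..).trans (add_zero 0))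

end QuaternionGroup

section Q12

variable {R : Type*} [CommRing R]

noncomputable def q12Rep (ψ : AddChar (ZMod (2 * 3)) R) : Representation R (QuaternionGroup 3)
    ((Fin 4 → R) × (Fin 2 → R) × (Fin 2 → R) × (Fin 2 → R) × (Fin 2 → R)) :=
  (trivial R _ _).prod <| (inducedRep ψ).prod <| (inducedRep (ψ ^ 2)).prod <|
    (inducedRep (ψ ^ 3)).prod (inducedRep (ψ ^ 4))

variable [Nontrivial R]

theorem trace_q12Rep_a (ψ : AddChar (ZMod (2 * 3)) R) (i : ZMod (2 * 3)) :
    LinearMap.trace R _ (q12Rep ψ (a i)) =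
      4 + ∑ k ∈ Finset.range 4, (ψ i ^ (k + 1) + ψ (-i) ^ (k + 1)) := by
  simp only [q12Rep, trace_prod_apply, Representation.trivial, MonoidHom.one_apply,
    LinearMap.trace_one, Module.finrank_fin_fun, trace_inducedRep_a, AddChar.pow_apply,
    Finset.sum_range_succ, Finset.sum_range_zero]
  ring

theorem trace_q12Rep_xa (ψ : AddChar (ZMod (2 * 3)) R) (i : ZMod (2 * 3)) :
    LinearMap.trace R _ (q12Rep ψ (xa i)) = 4 := by
  simp [q12Rep, trace_prod_apply, Representation.trivial, trace_inducedRep_xa]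

end Q12

theorem orderOf_mem_q12 (g : QuaternionGroup 3) :
    orderOf g ∈ ({1, 2, 3, 4, 5, 6, 8, 11} : Set ℕ) := by
  rcases g with i | i
  · rw [orderOf_a]
    have hi := ZMod.val_lt i
    generalize i.val = m at hi
    interval_cases m <;> simp
  · simp [orderOf_xa]

theorem trace_q12Rep {ψ : AddChar (ZMod (2 * 3)) ℂ} (hψ : IsPrimitiveRoot (ψ 1) (2 * 3))
    (g : QuaternionGroup 3) :
    LinearMap.trace ℂ _ (q12Rep ψ g) = mathieuCharValue (orderOf g) := by
  rcases g with i | i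
  · have hζ : ψ 1 ^ 2 - ψ 1 + 1 = 0 := by
      simpa [Polynomial.cyclotomic_six] using hψ.isRoot_cyclotomic (by norm_num)
    rw [trace_q12Rep_a, orderOf_a, ψ.map_neg_eq_pow_pred, ψ.apply_eq_pow_val]
    generalize ψ 1 = ζ at hζ
    have hi := ZMod.val_lt i
    generalize i.val = m at hi
    interval_cases m <;>
      simp only [Finset.sum_range_succ, Finset.sum_range_zero, mathieuCharValue, Nat.reduceGcd,
        Nat.reduceDiv, Nat.reduceMul, Nat.reduceAdd] <;>
      grind
  · simp [trace_q12Rep_xa, orderOf_xa, mathieuCharValue]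

theorem isSmallMathieuRep_q12Rep {ψ : AddChar (ZMod (2 * 3)) ℂ}
    (hψ : IsPrimitiveRoot (ψ 1) (2 * 3)) : IsSmallMathieuRep (q12Rep ψ) :=
  ⟨by simp [Module.finrank_prod], orderOf_mem_q12, trace_q12Rep hψ⟩

theorem sum_mathieuCharValue_orderOf_q12 :
    ∑ g : QuaternionGroup 3, mathieuCharValue (orderOf g) = 48 := by
  rw [← (sumEquiv 3).sum_comp, Fintype.sum_sum_type]
  simp only [sumEquiv, Equiv.coe_fn_mk, Sum.elim_inl, Sum.elim_inr, orderOf_xa, orderOf_a]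
  show ∑ i : Fin 6, mathieuCharValue (6 / Nat.gcd 6 i) + _ = _
  rw [Fin.sum_univ_eq_sum_range (fun m => mathieuCharValue (6 / Nat.gcd 6 m))]
  norm_num [Finset.sum_range_succ, mathieuCharValue]

/-- The dicyclic group `Q₁₂` (realized in Mathlib as `QuaternionGroup 3`) admits a small Mathieu
representation whose invariant subspace is 4-dimensional. -/
theorem Q12_has_small_mathieu_rep :
    ∃ (V : Type) (_ : AddCommGroup V) (_ : Module ℂ V)
      (ρ : Representation ℂ (QuaternionGroup 3) V),
        IsSmallMathieuRep ρ ∧ Module.finrank ℂ ρ.invariants = 4 := by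
  have hζ := Complex.isPrimitiveRoot_exp (2 * 3) (by norm_num)
  set ψ := AddChar.zmodChar _ hζ.pow_eq_one
  have hψ : ψ 1 = Complex.exp (2 * Real.pi * Complex.I / (2 * 3 : ℕ)) := by
    simpa using AddChar.zmodChar_apply' hζ.pow_eq_one 1
  have hρ := isSmallMathieuRep_q12Rep (hψ ▸ hζ)
  refine ⟨_, _, _, _, hρ, ?_⟩
  have average := hρ.finrank_invariants
  rw [sum_mathieuCharValue_orderOf_q12, Nat.card_eq_fintype_card, QuaternionGroup.card] at average
  exact_mod_cast average.trans (by norm_num : ((4 * 3 : ℕ) : ℂ)⁻¹ * 48 = 4)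
end

section
/- Neither the group C₂×C₃×C₃ of order 18 nor the group C₂×C₂×C₃ of order 12 admits a small Mathieu representation. -/
/-!
For a linear character `χ` of a finite group `G` and a representation `V`, the sum
`∑ g, χ g * trace (g | V)` is `|G|` times the dimension of the invariants of `V` twisted by `χ`.
So for a small Mathieu representation, `|G|` divides `∑ g, χ g * mathieuCharValue (orderOf g)`.
On `C₂ × C₃ × C₃` the trivial character gives `12 + 4 + 8 * 3 + 8 * 1 = 48`, not a multiple of
`18`; on `C₂ × C₂ × C₃` a character `ω` of order `3` through the `C₃` factor gives
`24 + 6 * (ω + ω²) = 18`, not a multiple of `12`.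
-/

open Finset Module

namespace Representation

variable {k G V : Type*} [Field k] [AddCommGroup V] [Module k V]

theorem sum_trace_eq_card_mul_finrank_invariants [Group G] [Fintype G]
    [Invertible (Fintype.card G : k)] [FiniteDimensional k V] (ρ : Representation k G V) :
    ∑ g, LinearMap.trace k V (ρ g) = Fintype.card G * finrank k ρ.invariants := by
  rw [← ρ.isProj_averageMap.trace]
  simp [averageMap, GroupAlgebra.average, map_sum, mul_sum, ← mul_assoc]

def twist [Monoid G] (ρ : Representation k G V) (χ : G →* k) : Representation k G V where
  toFun g := χ g • ρ g
  map_one' := by simp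
  map_mul' g h := by simp only [map_mul, smul_mul_smul_comm]

@[simp]
theorem twist_apply [Monoid G] (ρ : Representation k G V) (χ : G →* k) (g : G) :
    ρ.twist χ g = χ g • ρ g := rfl

end Representation

section SmallMathieu

variable {G : Type*} [Group G] [Fintype G]

theorem IsSmallMathieuRep.sum_mul_mathieuCharValue_eq {V : Type*} [AddCommGroup V] [Module ℂ V]
    {ρ : Representation ℂ G V} (hρ : IsSmallMathieuRep ρ) (χ : G →* ℂ) :
    ∑ g, χ g * mathieuCharValue (orderOf g) =
      Fintype.card G * finrank ℂ (ρ.twist χ).invariants := by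
  obtain ⟨hdim, -, hχ⟩ := hρ
  have : FiniteDimensional ℂ V := .of_finrank_pos (by omega)
  have : Invertible (Fintype.card G : ℂ) := invertibleOfNonzero (by simp)
  simp_rw [← (ρ.twist χ).sum_trace_eq_card_mul_finrank_invariants, ← hχ,
    Representation.twist_apply, map_smul, smul_eq_mul]

theorem HasSmallMathieuRep.card_dvd (h : HasSmallMathieuRep G) (χ : G →* ℂ) {m : ℕ}
    (hm : ∑ g, χ g * mathieuCharValue (orderOf g) = m) : Fintype.card G ∣ m := by
  obtain ⟨V, _, _, ρ, hρ⟩ := h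
  refine ⟨finrank ℂ (ρ.twist χ).invariants, ?_⟩
  exact_mod_cast hm.symm.trans (hρ.sum_mul_mathieuCharValue_eq χ)

end SmallMathieu

theorem ZMod.addOrderOf_eq_ite {p : ℕ} [Fact p.Prime] (x : ZMod p) :
    addOrderOf x = if x = 0 then 1 else p := by
  split_ifs with hx
  · simp [hx]
  · exact addOrderOf_eq_prime (by simp) hx

theorem ZMod.univ_two : (univ : Finset (ZMod 2)) = {0, 1} := rfl

theorem ZMod.univ_three : (univ : Finset (ZMod 3)) = {0, 1, 2} := rfl

theorem ZMod.stdAddChar_one_add_stdAddChar_two :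
    (stdAddChar (1 : ZMod 3) + stdAddChar (2 : ZMod 3) : ℂ) = -1 := by
  have hψ : (stdAddChar : AddChar (ZMod 3) ℂ) ≠ 0 := fun h ↦ by
    have h1 : stdAddChar (1 : ZMod 3) = (stdAddChar (0 : ZMod 3) : ℂ) := by
      simpa using DFunLike.congr_fun h 1
    exact absurd (injective_stdAddChar h1) (by decide)
  have := AddChar.sum_eq_zero_iff_ne_zero.2 hψ
  simp +decide [univ_three] at this
  linear_combination this

theorem sum_mathieuCharValue_C2C3C3 :
    ∑ g : Multiplicative (ZMod 2 × ZMod 3 × ZMod 3), mathieuCharValue (orderOf g) = 48 := by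
  rw [← Multiplicative.ofAdd.sum_comp]
  simp +decide [orderOf_ofAdd_eq_addOrderOf, Prod.addOrderOf, ZMod.addOrderOf_eq_ite,
    Fintype.sum_prod_type, ZMod.univ_two, ZMod.univ_three, mathieuCharValue]
  norm_num

theorem sum_stdAddChar_mul_mathieuCharValue_C2C2C3 :
    ∑ g : Multiplicative (ZMod 2 × ZMod 2 × ZMod 3),
      ZMod.stdAddChar g.toAdd.2.2 * mathieuCharValue (orderOf g) = 18 := by
  rw [← Multiplicative.ofAdd.sum_comp]
  simp +decide only [orderOf_ofAdd_eq_addOrderOf, Prod.addOrderOf, ZMod.addOrderOf_eq_ite,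
    Fintype.sum_prod_type, ZMod.univ_two, ZMod.univ_three, sum_insert, sum_singleton, mem_insert,
    mem_singleton]
  norm_num [mathieuCharValue]
  linear_combination 6 * ZMod.stdAddChar_one_add_stdAddChar_two

/-- Neither `C₂×C₃×C₃` (of order 18) nor `C₂×C₂×C₃` (of order 12) admits a small Mathieu
representation. -/
theorem no_small_mathieu_rep_C2C3C3_C2C2C3 :
    ¬ HasSmallMathieuRep (Multiplicative (ZMod 2 × ZMod 3 × ZMod 3)) ∧
      ¬ HasSmallMathieuRep (Multiplicative (ZMod 2 × ZMod 2 × ZMod 3)) := by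
  constructor
  · intro h
    have := h.card_dvd 1 (m := 48) (by simpa using sum_mathieuCharValue_C2C3C3)
    simp [Fintype.card_prod] at this
  · intro h
    let χ := (ZMod.stdAddChar.compAddMonoidHom ((AddMonoidHom.snd (ZMod 2) (ZMod 3)).comp
      (AddMonoidHom.snd (ZMod 2) (ZMod 2 × ZMod 3)))).toMonoidHom
    have := h.card_dvd χ (m := 18)
      (by exact_mod_cast sum_stdAddChar_mul_mathieuCharValue_C2C2C3)
    simp [Fintype.card_prod] at this
end

section
/- Let V be a 12-dimensional vector space over ℚ and let σ : V → V be a linear automorphism with σ⁶ = id. Suppose that tr(σ²) = 3, tr(σ³) = 4, and tr(σ) ∈ {1, 3}. Then tr(σ) = 1. -/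
/-!
Over `ℂ` the space splits into the generalized eigenspaces of `σ`, and their eigenvalues are
sixth roots of unity `ζ ^ j` with `ζ = exp (πi/3)`. Writing `d j` for their dimensions,
`tr σ = ∑ d j ζ ^ j` and `tr σ³ = ∑ (-1) ^ j d j`. Reducing with `ζ² = ζ - 1` gives
`tr σ = x + y ζ` with `x y ∈ ℤ`; as `tr σ` is rational and `ζ ∉ ℝ`, `y = 0`, and then
`tr σ³ - tr σ = 3 (d 2 - d 5)`. Thus `tr σ³ ≡ tr σ (mod 3)`, which excludes `tr σ = 3`.
-/

open Module

namespace Module.End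

lemma trace_pow_eq_of_isNilpotent_sub {R M : Type*} [CommRing R] [IsReduced R] [AddCommGroup M]
    [Module R M] [Module.Free R M] [Module.Finite R M] {g : End R M} (μ : R)
    (hg : IsNilpotent (g - algebraMap R _ μ)) (k : ℕ) :
    LinearMap.trace R M (g ^ k) = μ ^ k * finrank R M := by
  induction k with
  | zero => simp [LinearMap.trace_one]
  | succ k ih =>
    rw [pow_succ, mul_eq_comp, LinearMap.trace_comp_eq_mul_of_commute_of_isNilpotent μ
      ((Commute.refl g).pow_left k) hg, ih]
    ring

variable {K V : Type*} [Field K] [AddCommGroup V] [Module K V]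

lemma pow_eq_one_of_hasEigenvalue {f : End K V} {μ : K} {n : ℕ} (hf : f ^ n = 1)
    (hμ : f.HasEigenvalue μ) : μ ^ n = 1 := by
  obtain ⟨v, hv⟩ := hμ.exists_hasEigenvector
  have hv' := hv.pow_apply n
  rw [hf, one_apply] at hv'
  exact smul_left_injective K hv.2 (by simpa using hv'.symm)

variable [FiniteDimensional K V]

lemma support_pow_mul_finrank_maxGenEigenspace_subset (f : End K V) (k : ℕ) :
    Function.support (fun μ ↦ μ ^ k * (finrank K (f.maxGenEigenspace μ) : K)) ⊆
      {μ | f.maxGenEigenspace μ ≠ ⊥} := by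
  rintro μ hμ hbot
  simp [Submodule.finrank_eq_zero.mpr hbot] at hμ

lemma trace_pow_restrict_maxGenEigenspace (f : End K V) (μ : K) (k : ℕ) :
    LinearMap.trace K _ ((f ^ k).restrict
      (f.mapsTo_maxGenEigenspace_of_comm ((Commute.refl f).pow_right k) μ)) =
      μ ^ k * finrank K (f.maxGenEigenspace μ) := by
  have hf := f.mapsTo_maxGenEigenspace_of_comm (Commute.refl f) μ
  rw [← pow_restrict k hf]
  refine trace_pow_eq_of_isNilpotent_sub μ ?_ k
  convert f.isNilpotent_restrict_maxGenEigenspace_sub_algebraMap μ using 1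
  ext
  rfl

lemma trace_pow_eq_finsum_mul_finrank_maxGenEigenspace [IsAlgClosed K] (f : End K V) (k : ℕ) :
    LinearMap.trace K V (f ^ k) = ∑ᶠ μ, μ ^ k * finrank K (f.maxGenEigenspace μ) := by
  classical
  have hfin := WellFoundedGT.finite_ne_bot_of_iSupIndep f.independent_maxGenEigenspace
  have hint := DirectSum.isInternal_submodule_of_iSupIndep_of_iSup_eq_top
    f.independent_maxGenEigenspace f.iSup_maxGenEigenspace_eq_top
  rw [LinearMap.trace_eq_sum_trace_restrict' hint hfin
      (f.mapsTo_maxGenEigenspace_of_comm ((Commute.refl f).pow_right k)),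
    finsum_eq_sum_of_support_subset _ (s := hfin.toFinset) ?_]
  · exact Finset.sum_congr rfl fun μ _ ↦ trace_pow_restrict_maxGenEigenspace f μ k
  · simpa using support_pow_mul_finrank_maxGenEigenspace_subset f k

lemma trace_pow_eq_sum_finrank_maxGenEigenspace_pow [IsAlgClosed K] {f : End K V} {n : ℕ}
    [NeZero n] (hf : f ^ n = 1) {ζ : K} (hζ : IsPrimitiveRoot ζ n) (k : ℕ) :
    LinearMap.trace K V (f ^ k) =
      ∑ j ∈ Finset.range n, ζ ^ (j * k) * finrank K (f.maxGenEigenspace (ζ ^ j)) := by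
  classical
  rw [trace_pow_eq_finsum_mul_finrank_maxGenEigenspace, finsum_eq_sum_of_support_subset _
    (s := (Finset.range n).image (ζ ^ ·)) ?_, Finset.sum_image]
  · simp [pow_mul]
  · intro i hi j hj hij
    exact hζ.pow_inj (Finset.mem_range.1 hi) (Finset.mem_range.1 hj) hij
  · intro μ hμ
    have hne := support_pow_mul_finrank_maxGenEigenspace_subset f k hμ
    have hμn := pow_eq_one_of_hasEigenvalue hf
      ((hasUnifEigenvalue_iff_hasUnifEigenvalue_one (by simp)).mp hne)
    obtain ⟨i, hi, rfl⟩ := hζ.eq_pow_of_pow_eq_one hμn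
    simpa using ⟨i, hi, rfl⟩

end Module.End

lemma IsPrimitiveRoot.sub_eq_three_mul_of_ratCast_eq_sum {ζ : ℂ} (hζ : IsPrimitiveRoot ζ 6)
    (d : ℕ → ℤ) {a b : ℚ} (ha : (a : ℂ) = ∑ j ∈ Finset.range 6, ζ ^ (j * 1) * d j)
    (hb : (b : ℂ) = ∑ j ∈ Finset.range 6, ζ ^ (j * 3) * d j) :
    b - a = 3 * (d 2 - d 5 : ℤ) := by
  have hquad : ζ ^ 2 - ζ + 1 = 0 := by
    simpa [Polynomial.cyclotomic_six] using hζ.isRoot_cyclotomic (by norm_num)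
  have him : ζ.im ≠ 0 := by
    intro h
    have hre := congrArg Complex.re hquad
    simp [pow_two, h] at hre
    nlinarith [sq_nonneg (ζ.re - 1 / 2)]
  have hζ3 : ζ ^ 3 = -1 := by linear_combination (ζ + 1) * hquad
  simp only [Finset.sum_range_succ, Finset.sum_range_zero, mul_one, pow_one] at ha
  simp only [Finset.sum_range_succ, Finset.sum_range_zero, mul_comm _ 3, pow_mul, hζ3] at hb
  have ha' : (a : ℂ) = (d 0 - d 2 - d 3 + d 5 : ℤ) + (d 1 + d 2 - d 4 - d 5 : ℤ) * ζ := by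
    push_cast
    linear_combination
      ha + (d 2 + d 3 * (ζ + 1) + d 4 * (ζ ^ 2 + ζ) + d 5 * (ζ ^ 3 + ζ ^ 2 - 1)) * hquad
  have hy : (d 1 + d 2 - d 4 - d 5 : ℂ) = 0 := by
    have h := congrArg Complex.im ha'
    simp only [Complex.ratCast_im, Complex.add_im, Complex.intCast_im, Complex.mul_im,
      Complex.intCast_re, zero_mul, zero_add, add_zero] at h
    exact_mod_cast (mul_eq_zero.mp h.symm).resolve_right him
  have hdiff : ((b - a : ℚ) : ℂ) = ((3 * (d 2 - d 5) : ℤ) : ℂ) := by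
    push_cast at ha' hb ⊢
    linear_combination hb - ha' - (1 + ζ) * hy
  exact_mod_cast hdiff

open TensorProduct in
lemma exists_trace_pow_three_sub_trace_eq_three_mul {V : Type*} [AddCommGroup V] [Module ℚ V]
    [FiniteDimensional ℚ V] {f : Module.End ℚ V} (hf : f ^ 6 = 1) :
    ∃ m : ℤ, LinearMap.trace ℚ V (f ^ 3) - LinearMap.trace ℚ V f = 3 * m := by
  set F : Module.End ℂ (ℂ ⊗[ℚ] V) := f.baseChange ℂ
  have hF : F ^ 6 = 1 := by
    rw [← LinearMap.baseChange_pow, hf, Module.End.one_eq_id, LinearMap.baseChange_id]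
    rfl
  set ζ := Complex.exp (2 * Real.pi * Complex.I / (6 : ℕ))
  have hζ : IsPrimitiveRoot ζ 6 := Complex.isPrimitiveRoot_exp 6 (by norm_num)
  have htrace (k : ℕ) : (LinearMap.trace ℚ V (f ^ k) : ℂ) =
      ∑ j ∈ Finset.range 6,
        ζ ^ (j * k) * ((finrank ℂ (F.maxGenEigenspace (ζ ^ j)) : ℤ) : ℂ) := by
    have hbase : (LinearMap.trace ℚ V (f ^ k) : ℂ) = LinearMap.trace ℂ _ (F ^ k) := by
      rw [← LinearMap.baseChange_pow, LinearMap.trace_baseChange]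
      rfl
    rw [hbase, Module.End.trace_pow_eq_sum_finrank_maxGenEigenspace_pow hF hζ]
    simp
  have h := hζ.sub_eq_three_mul_of_ratCast_eq_sum _ (htrace 1) (htrace 3)
  rw [pow_one] at h
  exact ⟨_, h⟩

theorem trace_of_order_six_automorphism_general
    (V : Type*) [AddCommGroup V] [Module ℚ V] [FiniteDimensional ℚ V]
    (σ : V ≃ₗ[ℚ] V) (h6 : σ ^ 6 = 1)
    (h3 : LinearMap.trace ℚ V (σ ^ 3).toLinearMap = 4)
    (h1 : LinearMap.trace ℚ V σ.toLinearMap = 1 ∨ LinearMap.trace ℚ V σ.toLinearMap = 3) :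
    LinearMap.trace ℚ V σ.toLinearMap = 1 := by
  have hpow (k : ℕ) : (σ ^ k).toLinearMap = σ.toLinearMap ^ k :=
    map_pow LinearEquiv.automorphismGroup.toLinearMapMonoidHom σ k
  obtain ⟨m, hm⟩ := exists_trace_pow_three_sub_trace_eq_three_mul (f := σ.toLinearMap)
    (by rw [← hpow, h6]; rfl)
  refine h1.resolve_right fun h ↦ ?_
  rw [← hpow, h3, h] at hm
  have : (1 : ℤ) = 3 * m := by exact_mod_cast (by linarith : (1 : ℚ) = 3 * m)
  omega

/-- Let `V` be a 12-dimensional rational vector space and `σ` a linear automorphism of `V` with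
`σ⁶ = id`. If `tr(σ²) = 3`, `tr(σ³) = 4` and `tr(σ) ∈ {1, 3}`, then `tr(σ) = 1`. -/
theorem trace_of_order_six_automorphism
    (V : Type*) [AddCommGroup V] [Module ℚ V] [FiniteDimensional ℚ V]
    (hV : Module.finrank ℚ V = 12) (σ : V ≃ₗ[ℚ] V) (h6 : σ ^ 6 = 1)
    (h2 : LinearMap.trace ℚ V (σ ^ 2).toLinearMap = 3)
    (h3 : LinearMap.trace ℚ V (σ ^ 3).toLinearMap = 4)
    (h1 : LinearMap.trace ℚ V σ.toLinearMap = 1 ∨ LinearMap.trace ℚ V σ.toLinearMap = 3) :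
    LinearMap.trace ℚ V σ.toLinearMap = 1 :=
  trace_of_order_six_automorphism_general V σ h6 h3 h1
end

section
/- Let H₁ and H₂ be subgroups of order 8 of the group GL(2,𝔽₃) of invertible 2×2 matrices over the field with three elements. If H₁ and H₂ are isomorphic as abstract groups, then they are conjugate in GL(2,𝔽₃). -/
/-!
Every subgroup of order 8 is a 2-subgroup, hence conjugate into a fixed Sylow 2-subgroup `P`
of `GL(2,𝔽₃)` (of order 16). `P` is semidihedral, and a subgroup of index 2 of `P` contains all
squares of `P`, which form a subgroup of order 4 with quotient `C₂ × C₂`; so it is one of the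
three maximal subgroups `C₈`, `D₈`, `Q₈` of `P`. These are told apart by the number of solutions
of `a ^ 2 = 1` and of `a ^ 4 = 1`, so two isomorphic subgroups of order 8 inside `P` coincide.
-/

open Pointwise

theorem isUnit_of_mem_of_forall_exists_mul_eq_one {M : Type*} [Monoid M] {l : List M}
    (h : ∀ a ∈ l, ∃ b ∈ l, a * b = 1) {a : M} (ha : a ∈ l) : IsUnit a := by
  obtain ⟨b, hb, hab⟩ := h a ha
  obtain ⟨c, -, hbc⟩ := h b hb
  have hca : c = a := by
    calc c = a * b * c := by rw [hab, one_mul]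
      _ = a := by rw [mul_assoc, hbc, mul_one]
  exact ⟨⟨a, b, hab, hca ▸ hbc⟩, rfl⟩

namespace Units

variable {M : Type*} [Monoid M]

def subgroupOfList (l : List M) (one_mem : (1 : M) ∈ l) (mul_mem : ∀ a ∈ l, ∀ b ∈ l, a * b ∈ l)
    (exists_mul_eq_one : ∀ a ∈ l, ∃ b ∈ l, a * b = 1) : Subgroup Mˣ where
  carrier := {u | (u : M) ∈ l}
  one_mem' := one_mem
  mul_mem' ha hb := mul_mem _ ha _ hb
  inv_mem' {u} hu := by
    obtain ⟨b, hb, hub⟩ := exists_mul_eq_one _ hu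
    show ((u⁻¹ : Mˣ) : M) ∈ l
    rwa [Units.inv_eq_of_mul_eq_one_right hub]

variable {l : List M} {one_mem : (1 : M) ∈ l} {mul_mem : ∀ a ∈ l, ∀ b ∈ l, a * b ∈ l}
  {exists_mul_eq_one : ∀ a ∈ l, ∃ b ∈ l, a * b = 1}

theorem card_subtype_subgroupOfList [DecidableEq M] (hl : l.Nodup) (p : M → Prop)
    [DecidablePred p] :
    Nat.card {u : subgroupOfList l one_mem mul_mem exists_mul_eq_one // p (u : Mˣ)} =
      l.countP (fun a => p a) := by
  let f : {u : subgroupOfList l one_mem mul_mem exists_mul_eq_one // p (u : Mˣ)} →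
      (l.filter (fun a => p a)).toFinset := fun u => ⟨((u : Mˣ) : M), by
    simpa using ⟨u.1.2, u.2⟩⟩
  have hf : Function.Bijective f := by
    refine ⟨fun u v huv => Subtype.ext (Subtype.ext (Units.ext (congrArg Subtype.val huv))), ?_⟩
    rintro ⟨a, ha⟩
    simp only [List.mem_toFinset, List.mem_filter, decide_eq_true_eq] at ha
    obtain ⟨u, rfl⟩ := isUnit_of_mem_of_forall_exists_mul_eq_one exists_mul_eq_one ha.1
    exact ⟨⟨⟨u, ha.1⟩, ha.2⟩, rfl⟩
  rw [Nat.card_congr (Equiv.ofBijective f hf), Nat.card_eq_finsetCard,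
    List.toFinset_card_of_nodup (hl.filter _), List.countP_eq_length_filter]

theorem card_subgroupOfList [DecidableEq M] (hl : l.Nodup) :
    Nat.card (subgroupOfList l one_mem mul_mem exists_mul_eq_one) = l.length := by
  refine (Nat.card_congr (Equiv.subtypeUnivEquiv fun _ => trivial).symm).trans ?_
  exact (card_subtype_subgroupOfList hl fun _ => True).trans (congrFun List.countP_true l)

theorem card_pow_eq_one_subgroupOfList [DecidableEq M] (hl : l.Nodup) (n : ℕ) :
    Nat.card {u : subgroupOfList l one_mem mul_mem exists_mul_eq_one // u ^ n = 1} =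
      l.countP (· ^ n = 1) := by
  refine (Nat.card_congr (Equiv.subtypeEquivRight fun u => ?_)).trans
    (card_subtype_subgroupOfList hl _)
  rw [← Units.val_pow_eq_pow_val, ← Subgroup.coe_pow, Units.val_eq_one, OneMemClass.coe_eq_one]

end Units

theorem MulEquiv.card_pow_eq_one {A B : Type*} [Monoid A] [Monoid B] (e : A ≃* B) (n : ℕ) :
    Nat.card {a : A // a ^ n = 1} = Nat.card {b : B // b ^ n = 1} :=
  Nat.card_congr (e.toEquiv.subtypeEquiv fun a => by
    rw [MulEquiv.toEquiv_eq_coe, MulEquiv.coe_toEquiv, ← map_pow, MulEquiv.map_eq_one_iff])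

namespace Subgroup

variable {G : Type*} [Group G]

theorem card_mul_relIndex {H K : Subgroup G} (h : H ≤ K) :
    Nat.card H * H.relIndex K = Nat.card K := by
  simpa only [relIndex_bot_left] using relIndex_mul_relIndex _ _ _ bot_le h

theorem sq_mem_of_relIndex_eq_two {H K : Subgroup G} (h : H.relIndex K = 2) {a : G}
    (ha : a ∈ K) : a ^ 2 ∈ H := by
  simpa only [mem_subgroupOf, coe_pow] using sq_mem_of_index_two h ⟨a, ha⟩

theorem eq_of_relIndex_eq_two_of_lt_inf {V H K : Subgroup G} (hH : V.relIndex H = 2)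
    (hK : V.relIndex K = 2) (hV : V < H ⊓ K) : H = K := by
  have hV₁ : V.relIndex (H ⊓ K) ≠ 1 := fun h => hV.not_ge (relIndex_eq_one.1 h)
  have le_inf_of_relIndex_eq_two {L : Subgroup G} (hL : V.relIndex L = 2) (hL' : H ⊓ K ≤ L) :
      L ≤ H ⊓ K := by
    have := relIndex_mul_relIndex _ _ _ hV.le hL'
    rw [hL] at this
    rw [← relIndex_eq_one]
    rcases (Nat.dvd_prime Nat.prime_two).1 (Dvd.intro _ this) with h | h
    · exact absurd h hV₁
    · rw [h] at this; omega
  exact le_antisymm ((le_inf_of_relIndex_eq_two hH inf_le_left).trans inf_le_right)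
    ((le_inf_of_relIndex_eq_two hK inf_le_right).trans inf_le_left)

end Subgroup

theorem IsPGroup.exists_conj_smul_le {G : Type*} [Group G] {p : ℕ} [Fact p.Prime]
    [Finite (Sylow p G)] {H : Subgroup G} (hH : IsPGroup p H) (P : Sylow p G) :
    ∃ g : G, MulAut.conj g • H ≤ P := by
  obtain ⟨Q, hQ⟩ := hH.exists_le_sylow
  obtain ⟨g, rfl⟩ := MulAction.exists_smul_eq G Q P
  exact ⟨g, by rw [Sylow.coe_subgroup_smul]; exact Subgroup.pointwise_smul_le_pointwise_smul_iff.2 hQ⟩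

namespace GL2F3

abbrev Mat := Matrix (Fin 2) (Fin 2) (ZMod 3)

/-- Entrywise comparison, which the kernel evaluates much faster than the generic instance on
functions over a finite type. -/
instance : DecidableEq Mat := fun A B =>
  decidable_of_iff (A 0 0 = B 0 0 ∧ A 0 1 = B 0 1 ∧ A 1 0 = B 1 0 ∧ A 1 1 = B 1 1) (by
    rw [← Matrix.ext_iff, Fin.forall_fin_two, Fin.forall_fin_two, Fin.forall_fin_two]; tauto)

/- `x` has order 8, `y ^ 2 = 1` and `y x y⁻¹ = x ^ 3`: they generate the semidihedral group
`⟨x, y⟩` of order 16, whose maximal subgroups are `⟨x⟩ ≅ C₈`, `⟨x ^ 2, y⟩ ≅ D₈` and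
`⟨x ^ 2, x y⟩ ≅ Q₈`, and whose squares form `⟨x ^ 2⟩`. -/
def x : Mat := !![0, 1; 1, 1]

def y : Mat := !![1, 1; 0, 2]

def semidihedralList : List Mat := (List.range 8).flatMap fun i => [x ^ i, x ^ i * y]
def cyclicList : List Mat := (List.range 8).map (x ^ ·)
def dihedralList : List Mat := (List.range 4).flatMap fun i => [x ^ (2 * i), x ^ (2 * i) * y]
def quaternionList : List Mat :=
  (List.range 4).flatMap fun i => [x ^ (2 * i), x ^ (2 * i + 1) * y]
def squaresList : List Mat := (List.range 4).map fun i => x ^ (2 * i)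

def semidihedral : Subgroup (GL (Fin 2) (ZMod 3)) :=
  Units.subgroupOfList semidihedralList (by decide +kernel) (by decide +kernel) (by decide +kernel)
def cyclic : Subgroup (GL (Fin 2) (ZMod 3)) :=
  Units.subgroupOfList cyclicList (by decide +kernel) (by decide +kernel) (by decide +kernel)
def dihedral : Subgroup (GL (Fin 2) (ZMod 3)) :=
  Units.subgroupOfList dihedralList (by decide +kernel) (by decide +kernel) (by decide +kernel)
def quaternion : Subgroup (GL (Fin 2) (ZMod 3)) :=
  Units.subgroupOfList quaternionList (by decide +kernel) (by decide +kernel) (by decide +kernel)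
def squares : Subgroup (GL (Fin 2) (ZMod 3)) :=
  Units.subgroupOfList squaresList (by decide +kernel) (by decide +kernel) (by decide +kernel)

theorem card_semidihedral : Nat.card semidihedral = 16 :=
  Units.card_subgroupOfList (by decide +kernel)

theorem card_cyclic : Nat.card cyclic = 8 := Units.card_subgroupOfList (by decide +kernel)
theorem card_dihedral : Nat.card dihedral = 8 := Units.card_subgroupOfList (by decide +kernel)
theorem card_quaternion : Nat.card quaternion = 8 := Units.card_subgroupOfList (by decide +kernel)
theorem card_squares : Nat.card squares = 4 := Units.card_subgroupOfList (by decide +kernel)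

theorem card_GL : Nat.card (GL (Fin 2) (ZMod 3)) = 48 := by
  rw [Matrix.card_GL_field, ZMod.card]
  rfl

theorem index_semidihedral : semidihedral.index = 3 := by
  have := semidihedral.index_mul_card
  rw [card_semidihedral, card_GL] at this
  omega

def sylowTwo : Sylow 2 (GL (Fin 2) (ZMod 3)) :=
  (IsPGroup.of_card (n := 4) card_semidihedral).toSylow (by rw [index_semidihedral]; decide)

theorem exists_conj_smul_le_semidihedral {H : Subgroup (GL (Fin 2) (ZMod 3))}
    (hH : Nat.card H = 8) : ∃ g : GL (Fin 2) (ZMod 3), MulAut.conj g • H ≤ semidihedral :=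
  (IsPGroup.of_card (n := 3) hH).exists_conj_smul_le sylowTwo

theorem squares_le_of_relIndex_eq_two {H : Subgroup (GL (Fin 2) (ZMod 3))}
    (hH : H.relIndex semidihedral = 2) : squares ≤ H := by
  intro v hv
  obtain ⟨a, ha, hav⟩ : ∃ a ∈ semidihedralList, a ^ 2 = v :=
    (by decide +kernel : ∀ v ∈ squaresList, ∃ a ∈ semidihedralList, a ^ 2 = v) _ hv
  obtain ⟨u, rfl⟩ := isUnit_of_mem_of_forall_exists_mul_eq_one (by decide +kernel) ha
  convert Subgroup.sq_mem_of_relIndex_eq_two hH (show u ∈ semidihedral from ha)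
  exact Units.ext hav.symm

theorem eq_cyclic_or_eq_dihedral_or_eq_quaternion {H : Subgroup (GL (Fin 2) (ZMod 3))}
    (hH : H ≤ semidihedral) (hcard : Nat.card H = 8) :
    H = cyclic ∨ H = dihedral ∨ H = quaternion := by
  have relIndex_squares {K : Subgroup (GL (Fin 2) (ZMod 3))} (hK : squares ≤ K)
      (hcard : Nat.card K = 8) : squares.relIndex K = 2 := by
    have := Subgroup.card_mul_relIndex hK
    rw [card_squares, hcard] at this
    omega
  have hsq : squares ≤ H := squares_le_of_relIndex_eq_two (by
    have := Subgroup.card_mul_relIndex hH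
    rw [hcard, card_semidihedral] at this
    omega)
  obtain ⟨b, hbH, hb⟩ := SetLike.exists_of_lt (hsq.lt_of_ne fun h => by
    have := card_squares; rw [h, hcard] at this; omega)
  have eq_of_mem {K : Subgroup (GL (Fin 2) (ZMod 3))} (hK : squares ≤ K) (hcardK : Nat.card K = 8)
      (hbK : b ∈ K) : H = K :=
    Subgroup.eq_of_relIndex_eq_two_of_lt_inf (relIndex_squares hsq hcard)
      (relIndex_squares hK hcardK)
      (SetLike.lt_iff_le_and_exists.2 ⟨le_inf hsq hK, b, Subgroup.mem_inf.2 ⟨hbH, hbK⟩, hb⟩)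
  have hsqC : squares ≤ cyclic := fun _ h => (by decide +kernel : squaresList ⊆ cyclicList) h
  have hsqD : squares ≤ dihedral := fun _ h => (by decide +kernel : squaresList ⊆ dihedralList) h
  have hsqQ : squares ≤ quaternion :=
    fun _ h => (by decide +kernel : squaresList ⊆ quaternionList) h
  rcases (by decide +kernel : ∀ a ∈ semidihedralList, a ∉ squaresList →
      a ∈ cyclicList ∨ a ∈ dihedralList ∨ a ∈ quaternionList) _ (hH hbH) hb with hC | hD | hQ
  · exact .inl (eq_of_mem hsqC card_cyclic hC)
  · exact .inr (.inl (eq_of_mem hsqD card_dihedral hD))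
  · exact .inr (.inr (eq_of_mem hsqQ card_quaternion hQ))

theorem card_pow_eq_one_cyclic (n : ℕ) :
    Nat.card {a : cyclic // a ^ n = 1} = cyclicList.countP (· ^ n = 1) :=
  Units.card_pow_eq_one_subgroupOfList (by decide +kernel) n

theorem card_pow_eq_one_dihedral (n : ℕ) :
    Nat.card {a : dihedral // a ^ n = 1} = dihedralList.countP (· ^ n = 1) :=
  Units.card_pow_eq_one_subgroupOfList (by decide +kernel) n

theorem card_pow_eq_one_quaternion (n : ℕ) :
    Nat.card {a : quaternion // a ^ n = 1} = quaternionList.countP (· ^ n = 1) :=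
  Units.card_pow_eq_one_subgroupOfList (by decide +kernel) n

theorem eq_of_le_semidihedral_of_mulEquiv {H K : Subgroup (GL (Fin 2) (ZMod 3))}
    (hH : H ≤ semidihedral) (hK : K ≤ semidihedral) (hcard : Nat.card H = 8) (e : H ≃* K) :
    H = K := by
  have h₂ := e.card_pow_eq_one 2
  have h₄ := e.card_pow_eq_one 4
  rcases eq_cyclic_or_eq_dihedral_or_eq_quaternion hH hcard with rfl | rfl | rfl <;>
  rcases eq_cyclic_or_eq_dihedral_or_eq_quaternion hK
    ((Nat.card_congr e.toEquiv).symm.trans hcard) with rfl | rfl | rfl <;>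
  simp only [card_pow_eq_one_cyclic, card_pow_eq_one_dihedral, card_pow_eq_one_quaternion]
    at h₂ h₄ <;>
  first | rfl | exact absurd (And.intro h₂ h₄) (by decide +kernel)

end GL2F3

open GL2F3

/-- Two subgroups of order 8 of `GL(2,𝔽₃)` that are isomorphic as abstract groups are
conjugate in `GL(2,𝔽₃)`. -/
theorem isomorphic_order_eight_subgroups_of_GL2F3_are_conjugate
    (H₁ H₂ : Subgroup (Matrix.GeneralLinearGroup (Fin 2) (ZMod 3)))
    (h₁ : Nat.card H₁ = 8) (h₂ : Nat.card H₂ = 8) (hiso : Nonempty (H₁ ≃* H₂)) :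
    ∃ x : Matrix.GeneralLinearGroup (Fin 2) (ZMod 3),
      Subgroup.map (MulAut.conj x).toMonoidHom H₁ = H₂ := by
  obtain ⟨e⟩ := hiso
  obtain ⟨g₁, hg₁⟩ := exists_conj_smul_le_semidihedral h₁
  obtain ⟨g₂, hg₂⟩ := exists_conj_smul_le_semidihedral h₂
  have hconj : MulAut.conj g₁ • H₁ = MulAut.conj g₂ • H₂ :=
    eq_of_le_semidihedral_of_mulEquiv hg₁ hg₂
      ((Nat.card_congr (Subgroup.equivSMul _ H₁).toEquiv).symm.trans h₁)
      (((Subgroup.equivSMul _ H₁).symm.trans e).trans (Subgroup.equivSMul _ H₂))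
  refine ⟨g₂⁻¹ * g₁, ?_⟩
  change MulAut.conj (g₂⁻¹ * g₁) • H₁ = H₂
  rw [map_mul, mul_smul, hconj, map_inv, inv_smul_smul]
end

section
/- Every group of order dividing 8 that is not isomorphic to the cyclic group C₈ and not isomorphic to the quaternion group Q₈ can be embedded into the group C₂×D₈, where D₈ is the dihedral group of order 8 (equivalently, into a 2-Sylow subgroup of the symmetric group S₆). -/
/-!
Either every element of `G` squares to `1`, and then `G` is an `𝔽₂`-vector space of dimension at
most 3, which embeds linearly into the elementary abelian subgroup `C₂ × {1, r², s, sr²}` of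
`C₂ × D₈`; or `G` has an element `x` of order 4 (order 8 would make `G ≅ C₈`). If `|G| = 4` then
`G ≅ C₄ ≅ ⟨r⟩`. If `|G| = 8`, then `⟨x⟩` has index 2, and for `b ∉ ⟨x⟩` conjugation by `b` fixes or
inverts `x`, while `b² ∈ {1, x²}` (otherwise `b` has order 8). The four combinations give
`C₂ × C₄` (twice), `D₈` and `Q₈`, and the first two embed into `C₂ × D₈`.
-/

open Subgroup Module DihedralGroup

section

variable {G : Type*} [Group G]

def zmodPowersHom (n : ℕ) (a : G) (ha : a ^ n = 1) : Multiplicative (ZMod n) →* G :=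
  AddMonoidHom.toMultiplicativeLeft <| ZMod.lift n
    ⟨zmultiplesHom (Additive G) (Additive.ofMul a), by simpa using congrArg Additive.ofMul ha⟩

variable {n : ℕ} {a : G} {ha : a ^ n = 1}

@[simp]
theorem zmodPowersHom_ofAdd_intCast (k : ℤ) :
    zmodPowersHom n a ha (.ofAdd (k : ZMod n)) = a ^ k :=
  congrArg Additive.toMul (ZMod.lift_coe n _ k)

@[simp]
theorem zmodPowersHom_ofAdd_natCast (k : ℕ) :
    zmodPowersHom n a ha (.ofAdd (k : ZMod n)) = a ^ k := by
  simpa using zmodPowersHom_ofAdd_intCast (ha := ha) k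

@[simp]
theorem zmodPowersHom_ofAdd_one : zmodPowersHom n a ha (.ofAdd 1) = a := by
  simpa using zmodPowersHom_ofAdd_natCast (ha := ha) 1

theorem zmodPowersHom_mem_zpowers (i : Multiplicative (ZMod n)) :
    zmodPowersHom n a ha i ∈ zpowers a := by
  obtain ⟨k, rfl⟩ := ZMod.intCast_surjective i.toAdd
  exact ⟨k, (zmodPowersHom_ofAdd_intCast k).symm⟩

theorem zmodPowersHom_mul_eq_mul_inv {b : G} (hab : b * a * b⁻¹ = a⁻¹)
    (i : Multiplicative (ZMod n)) :
    zmodPowersHom n a ha i * b = b * (zmodPowersHom n a ha i)⁻¹ := by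
  obtain ⟨k, hk⟩ := zmodPowersHom_mem_zpowers (ha := ha) i
  have hconj : b * a ^ (-k) * b⁻¹ = a ^ k := by rw [← conj_zpow, hab, inv_zpow, zpow_neg, inv_inv]
  calc zmodPowersHom n a ha i * b = b * a ^ (-k) * b⁻¹ * b := by rw [hconj, ← hk]
    _ = b * (zmodPowersHom n a ha i)⁻¹ := by rw [← hk]; group

end

namespace DihedralGroup

variable {n : ℕ} {G : Type*} [Group G]

def rHom : Multiplicative (ZMod n) →* DihedralGroup n where
  toFun i := r i.toAdd
  map_one' := rfl
  map_mul' _ _ := (r_mul_r _ _).symm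

theorem rHom_injective : Function.Injective (rHom (n := n)) := fun _ _ h ↦ r.inj h

def lift (a b : G) (ha : a ^ n = 1) (hb : b ^ 2 = 1) (hab : b * a * b⁻¹ = a⁻¹) :
    DihedralGroup n →* G where
  toFun
    | r i => zmodPowersHom n a ha (.ofAdd i)
    | sr i => b * zmodPowersHom n a ha (.ofAdd i)
  map_one' := map_one _
  map_mul' := by
    have hbA := zmodPowersHom_mul_eq_mul_inv (ha := ha) hab
    rintro (i | i) (j | j) <;>
      simp only [r_mul_r, r_mul_sr, sr_mul_r, sr_mul_sr, sub_eq_neg_add, ofAdd_add, ofAdd_neg,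
        map_mul, map_inv]
    · rw [← mul_assoc, ← mul_assoc, hbA]
    · rw [mul_assoc]
    · rw [mul_assoc b, ← mul_assoc _ b, hbA]
      simp only [← mul_assoc, ← sq, hb, one_mul]

end DihedralGroup

namespace QuaternionGroup

variable {n : ℕ} {G : Type*} [Group G]

def lift (a b : G) (ha : a ^ (2 * n) = 1) (hb : b ^ 2 = a ^ n) (hab : b * a * b⁻¹ = a⁻¹) :
    QuaternionGroup n →* G where
  toFun
    | .a i => zmodPowersHom (2 * n) a ha (.ofAdd i)
    | .xa i => b * zmodPowersHom (2 * n) a ha (.ofAdd i)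
  map_one' := map_one _
  map_mul' := by
    have hbA := zmodPowersHom_mul_eq_mul_inv (ha := ha) hab
    rintro (i | i) (j | j) <;>
      simp only [a_mul_a, a_mul_xa, xa_mul_a, xa_mul_xa, add_sub_assoc] <;>
      simp only [sub_eq_neg_add, ofAdd_add, ofAdd_neg, map_mul, map_inv,
        zmodPowersHom_ofAdd_natCast]
    · rw [← mul_assoc, ← mul_assoc, hbA]
    · rw [mul_assoc]
    · rw [mul_assoc b, ← mul_assoc _ b, hbA]
      simp only [← mul_assoc, ← sq, hb]

end QuaternionGroup

namespace Subgroup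

variable {G : Type*} [Group G]

theorem zpowers_lt_of_mem_of_notMem {S : Subgroup G} {a b : G} (ha : a ∈ S) (hb : b ∈ S)
    (hba : b ∉ zpowers a) : zpowers a < S :=
  SetLike.lt_iff_le_and_exists.2 ⟨zpowers_le.2 ha, b, hb, hba⟩

variable [Finite G]

theorem index_zpowers_eq_two {a : G} (hG : Nat.card G = 2 * orderOf a) :
    (zpowers a).index = 2 := by
  have h := (zpowers a).card_mul_index
  rw [Nat.card_zpowers, hG, mul_comm 2] at h
  exact Nat.eq_of_mul_eq_mul_left (orderOf_pos a) h

theorem eq_top_of_zpowers_lt {S : Subgroup G} {a : G} (hG : Nat.card G = 2 * orderOf a)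
    (hS : zpowers a < S) : S = ⊤ := by
  have hlt := index_strictAnti hS
  rw [index_zpowers_eq_two hG] at hlt
  have := S.index_ne_zero_of_finite
  exact index_eq_one.1 (by omega)

end Subgroup

section

variable {G : Type*} [Group G] [Finite G]

theorem MonoidHom.bijective_of_zpowers_lt_range {K : Type*} [Group K] (φ : K →* G) {a : G}
    (hG : Nat.card G = 2 * orderOf a) (hK : Nat.card K = Nat.card G) (hφ : zpowers a < φ.range) :
    Function.Bijective φ := by
  have : Finite K := Nat.finite_of_card_ne_zero (hK ▸ Nat.card_pos.ne')
  exact (Nat.bijective_iff_surjective_and_card φ).2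
    ⟨range_eq_top.1 (eq_top_of_zpowers_lt hG hφ), hK⟩

theorem nonempty_mulEquiv_zmod_of_orderOf_eq {n : ℕ} {x : G} (hG : Nat.card G = n)
    (hx : orderOf x = n) : Nonempty (G ≃* Multiplicative (ZMod n)) := by
  have htop : zpowers x = ⊤ := eq_top_of_card_eq _ (by rw [Nat.card_zpowers, hx, hG])
  exact ⟨(zmodMulEquivOfGenerator (fun y ↦ htop ▸ mem_top y) hG).symm⟩

theorem nonempty_mulEquiv_zmod_two_prod_zmod {n : ℕ} {a c : G} (hG : Nat.card G = 2 * n)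
    (ha : orderOf a = n) (hca : c ∉ zpowers a) (hc : c ^ 2 = 1) (hac : Commute a c) :
    Nonempty (G ≃* Multiplicative (ZMod 2) × Multiplicative (ZMod n)) := by
  subst ha
  let φ := (zmodPowersHom 2 c hc).noncommCoprod (zmodPowersHom _ a (pow_orderOf_eq_one a))
    fun i j ↦ by
      obtain ⟨k, hk⟩ := zmodPowersHom_mem_zpowers (ha := hc) i
      obtain ⟨l, hl⟩ := zmodPowersHom_mem_zpowers (ha := pow_orderOf_eq_one a) j
      rw [← hk, ← hl]
      exact (hac.zpow_zpow l k).symm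
  have hφ : zpowers a < φ.range := zpowers_lt_of_mem_of_notMem
    ⟨(1, .ofAdd 1), by simp [φ]⟩ ⟨(.ofAdd 1, 1), by simp [φ]⟩ hca
  exact ⟨(MulEquiv.ofBijective φ (φ.bijective_of_zpowers_lt_range hG (by
    rw [Nat.card_prod, Nat.card_congr Multiplicative.toAdd, Nat.card_congr Multiplicative.toAdd,
      Nat.card_zmod, Nat.card_zmod, hG]) hφ)).symm⟩

theorem nonempty_mulEquiv_dihedralGroup {n : ℕ} {a b : G} (hG : Nat.card G = 2 * n)
    (ha : orderOf a = n) (hba : b ∉ zpowers a) (hb : b ^ 2 = 1) (hab : b * a * b⁻¹ = a⁻¹) :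
    Nonempty (G ≃* DihedralGroup n) := by
  subst ha
  let φ := DihedralGroup.lift a b (pow_orderOf_eq_one a) hb hab
  have hφ : zpowers a < φ.range := zpowers_lt_of_mem_of_notMem
    ⟨r 1, zmodPowersHom_ofAdd_one (ha := pow_orderOf_eq_one a)⟩
    ⟨sr 0, mul_eq_left.2 (map_one _)⟩ hba
  exact ⟨(MulEquiv.ofBijective φ
    (φ.bijective_of_zpowers_lt_range hG (nat_card.trans hG.symm) hφ)).symm⟩

theorem nonempty_mulEquiv_quaternionGroup {n : ℕ} {a b : G} (hG : Nat.card G = 4 * n)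
    (ha : orderOf a = 2 * n) (hba : b ∉ zpowers a) (hb : b ^ 2 = a ^ n)
    (hab : b * a * b⁻¹ = a⁻¹) : Nonempty (G ≃* QuaternionGroup n) := by
  have : NeZero n := ⟨fun h ↦ Nat.card_pos.ne' (by rw [hG, h, mul_zero])⟩
  let φ := QuaternionGroup.lift a b (ha ▸ pow_orderOf_eq_one a) hb hab
  have hφ : zpowers a < φ.range := zpowers_lt_of_mem_of_notMem
    ⟨.a 1, zmodPowersHom_ofAdd_one (ha := ha ▸ pow_orderOf_eq_one a)⟩
    ⟨.xa 0, mul_eq_left.2 (map_one _)⟩ hba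
  have hcard : Nat.card (QuaternionGroup n) = Nat.card G := by
    rw [Nat.card_eq_fintype_card, QuaternionGroup.card, hG]
  exact ⟨(MulEquiv.ofBijective φ
    (φ.bijective_of_zpowers_lt_range (by rw [hG, ha]; ring) hcard hφ)).symm⟩

end

theorem exists_injective_of_sq_eq_one {G H : Type*} [Group G] [Group H] [Finite G] [Finite H]
    (hG : ∀ x : G, x ^ 2 = 1) (hH : ∀ y : H, y ^ 2 = 1) (hcard : Nat.card G ∣ Nat.card H) :
    ∃ f : G →* H, Function.Injective f := by
  let : CommGroup G :=
    { mul_comm := (Commute.of_orderOf_dvd_two fun x ↦ orderOf_dvd_of_pow_eq_one (hG x)) }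
  let : CommGroup H :=
    { mul_comm := (Commute.of_orderOf_dvd_two fun y ↦ orderOf_dvd_of_pow_eq_one (hH y)) }
  let := AddCommGroup.zmodModule (n := 2) (G := Additive G) fun x ↦
    congrArg Additive.ofMul (hG x.toMul)
  let := AddCommGroup.zmodModule (n := 2) (G := Additive H) fun y ↦
    congrArg Additive.ofMul (hH y.toMul)
  have hrank : finrank (ZMod 2) (Additive G) ≤ finrank (ZMod 2) (Additive H) := by
    have hG' : Nat.card G = 2 ^ finrank (ZMod 2) (Additive G) := by
      simpa [Nat.card_congr (Additive.toMul (α := G))] using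
        natCard_eq_pow_finrank (K := ZMod 2) (V := Additive G)
    have hH' : Nat.card H = 2 ^ finrank (ZMod 2) (Additive H) := by
      simpa [Nat.card_congr (Additive.toMul (α := H))] using
        natCard_eq_pow_finrank (K := ZMod 2) (V := Additive H)
    rwa [← Nat.pow_dvd_pow_iff_le_right one_lt_two, ← hG', ← hH']
  obtain ⟨f, hf⟩ := finrank_le_iff_exists_linearMap.1 hrank
  exact ⟨MonoidHom.toAdditive.symm f.toAddMonoidHom, hf⟩

section

variable {G : Type*} [Group G]

theorem eq_one_or_eq_or_eq_sq_or_eq_inv_of_mem_zpowers {x y : G} (hx : orderOf x = 4)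
    (hy : y ∈ zpowers x) : y = 1 ∨ y = x ∨ y = x ^ 2 ∨ y = x⁻¹ := by
  classical
  have hfin : IsOfFinOrder x := orderOf_pos_iff.1 (by omega)
  obtain ⟨k, hk, rfl⟩ : ∃ k < 4, x ^ k = y := by
    simpa [hfin.mem_zpowers_iff_mem_range_orderOf, hx] using hy
  have hx4 : x ^ 4 = 1 := hx ▸ pow_orderOf_eq_one x
  have hx3 : x ^ 3 = x⁻¹ := eq_inv_of_mul_eq_one_left (by rw [← pow_succ]; exact hx4)
  interval_cases k <;> simp [hx3]

theorem eq_or_eq_inv_of_mem_zpowers_of_sq_ne_one {x y : G} (hx : orderOf x = 4)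
    (hy : y ∈ zpowers x) (hy2 : y ^ 2 ≠ 1) : y = x ∨ y = x⁻¹ := by
  have hx4 : x ^ 4 = 1 := hx ▸ pow_orderOf_eq_one x
  have hx22 : (x ^ 2) ^ 2 = 1 := by rw [← pow_mul]; exact hx4
  rcases eq_one_or_eq_or_eq_sq_or_eq_inv_of_mem_zpowers hx hy with rfl | h | rfl | h
  · simp at hy2
  · exact .inl h
  · exact absurd hx22 hy2
  · exact .inr h

theorem eq_one_or_eq_sq_of_mem_zpowers_of_sq_eq_one {x y : G} (hx : orderOf x = 4)
    (hy : y ∈ zpowers x) (hy2 : y ^ 2 = 1) : y = 1 ∨ y = x ^ 2 := by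
  have hx2 : x ^ 2 ≠ 1 := fun h ↦ by have := orderOf_le_of_pow_eq_one two_pos h; omega
  rcases eq_one_or_eq_or_eq_sq_or_eq_inv_of_mem_zpowers hx hy with h | rfl | h | rfl
  · exact .inl h
  · exact absurd hy2 hx2
  · exact .inr h
  · exact absurd (by rwa [inv_pow, inv_eq_one] at hy2) hx2

variable [Finite G]

theorem nonempty_mulEquiv_of_card_eq_eight {x : G} (hG : Nat.card G = 8) (hx : orderOf x = 4) :
    Nonempty (G ≃* Multiplicative (ZMod 2) × Multiplicative (ZMod 4)) ∨
      Nonempty (G ≃* DihedralGroup 4) ∨ Nonempty (G ≃* QuaternionGroup 2) ∨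
        Nonempty (G ≃* Multiplicative (ZMod 8)) := by
  have hidx := index_zpowers_eq_two (a := x) (by rw [hG, hx])
  obtain ⟨b, hb⟩ : ∃ b, b ∉ zpowers x := by
    by_contra! h
    rw [← eq_top_iff'] at h
    simp [h] at hidx
  have hx2 : x ^ 2 ≠ 1 := fun h ↦ by have := orderOf_le_of_pow_eq_one two_pos h; omega
  have hx4 : x ^ 4 = 1 := hx ▸ pow_orderOf_eq_one x
  by_cases hb4 : (b ^ 2) ^ 2 = 1
  swap
  · refine .inr <| .inr <| .inr <| nonempty_mulEquiv_zmod_of_orderOf_eq (x := b) hG ?_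
    exact orderOf_eq_prime_pow (p := 2) (n := 2) (by rwa [← pow_mul] at hb4)
      (hG ▸ pow_card_eq_one' : b ^ 8 = 1)
  have hconj : b * x * b⁻¹ = x ∨ b * x * b⁻¹ = x⁻¹ := by
    refine eq_or_eq_inv_of_mem_zpowers_of_sq_ne_one hx
      ((normal_of_index_eq_two hidx).conj_mem x (mem_zpowers x) b) ?_
    rwa [conj_pow, Ne, mul_inv_eq_one, mul_eq_left]
  obtain hb2 | hb2 :=
    eq_one_or_eq_sq_of_mem_zpowers_of_sq_eq_one hx (sq_mem_of_index_two hidx b) hb4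
  all_goals rcases hconj with hbx | hbx
  · have hxb : Commute x b := (mul_inv_eq_iff_eq_mul.1 hbx).symm
    exact .inl (nonempty_mulEquiv_zmod_two_prod_zmod hG hx hb hb2 hxb)
  · exact .inr <| .inl <| nonempty_mulEquiv_dihedralGroup hG hx hb hb2 hbx
  · have hxb : Commute x b := (mul_inv_eq_iff_eq_mul.1 hbx).symm
    refine .inl (nonempty_mulEquiv_zmod_two_prod_zmod (c := x * b) hG hx
      (fun h ↦ hb ((mul_mem_cancel_left (mem_zpowers x)).1 h)) ?_ ((Commute.refl x).mul_right hxb))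
    rw [hxb.mul_pow, hb2, ← pow_add]
    exact hx4
  · exact .inr <| .inr <| .inl <| nonempty_mulEquiv_quaternionGroup hG hx hb hb2 hbx

end

def elemAbSubgroup : Subgroup (Multiplicative (ZMod 2) × DihedralGroup 4) where
  carrier := {p | p.2 = r 0 ∨ p.2 = r 2 ∨ p.2 = sr 0 ∨ p.2 = sr 2}
  mul_mem' := by decide
  one_mem' := by decide
  inv_mem' := by decide

instance : DecidablePred (· ∈ elemAbSubgroup) := fun p ↦
  inferInstanceAs (Decidable (p.2 = r 0 ∨ p.2 = r 2 ∨ p.2 = sr 0 ∨ p.2 = sr 2))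

theorem card_elemAbSubgroup : Nat.card elemAbSubgroup = 8 := by
  rw [Nat.card_eq_fintype_card]
  decide

theorem sq_eq_one_of_elemAbSubgroup : ∀ y : elemAbSubgroup, y ^ 2 = 1 := by
  decide

theorem Nat.eq_four_or_eight_of_dvd_eight {n : ℕ} (h8 : n ∣ 8) (h2 : ¬n ∣ 2) : n = 4 ∨ n = 8 := by
  have := Nat.le_of_dvd (by norm_num) h8
  interval_cases n <;> simp_all

/-- Every group of order dividing 8 that is not cyclic of order 8 and not the quaternion group
`Q₈` embeds into `C₂ × D₈` (a 2-Sylow subgroup of `S₆`). -/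
theorem small_two_group_embeds_in_C2D8
    (G : Type*) [Group G] [Fintype G] (hcard : Fintype.card G ∣ 8)
    (hC8 : IsEmpty (G ≃* Multiplicative (ZMod 8)))
    (hQ8 : IsEmpty (G ≃* QuaternionGroup 2)) :
    ∃ f : G →* Multiplicative (ZMod 2) × DihedralGroup 4, Function.Injective f := by
  rw [← Nat.card_eq_fintype_card] at hcard
  by_cases hsq : ∀ x : G, x ^ 2 = 1
  · obtain ⟨f, hf⟩ := exists_injective_of_sq_eq_one hsq sq_eq_one_of_elemAbSubgroup
      (card_elemAbSubgroup ▸ hcard)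
    exact ⟨elemAbSubgroup.subtype.comp f, elemAbSubgroup.subtype_injective.comp hf⟩
  obtain ⟨x, hx⟩ := not_forall.1 hsq
  obtain hx4 | hx8 := Nat.eq_four_or_eight_of_dvd_eight ((orderOf_dvd_natCard x).trans hcard)
    (mt orderOf_dvd_iff_pow_eq_one.1 hx)
  · obtain hG | hG := Nat.eq_four_or_eight_of_dvd_eight hcard
      fun h ↦ absurd ((hx4 ▸ orderOf_dvd_natCard x).trans h) (by norm_num)
    · obtain ⟨e⟩ := nonempty_mulEquiv_zmod_of_orderOf_eq hG hx4
      exact ⟨((MonoidHom.inr _ _).comp rHom).comp e.toMonoidHom,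
        ((Prod.mk_right_injective 1).comp rHom_injective).comp e.injective⟩
    rcases nonempty_mulEquiv_of_card_eq_eight hG hx4 with ⟨⟨e⟩⟩ | ⟨⟨e⟩⟩ | ⟨⟨e⟩⟩ | ⟨⟨e⟩⟩
    · exact ⟨(MonoidHom.prodMap (.id _) rHom).comp e.toMonoidHom,
        (Function.injective_id.prodMap rHom_injective).comp e.injective⟩
    · exact ⟨(MonoidHom.inr _ _).comp e.toMonoidHom, (Prod.mk_right_injective 1).comp e.injective⟩
    · exact hQ8.elim e
    · exact hC8.elim e
  · have hG : Nat.card G = 8 := Nat.dvd_antisymm hcard (hx8 ▸ orderOf_dvd_natCard x)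
    exact hC8.elim (nonempty_mulEquiv_zmod_of_orderOf_eq hG hx8).some
end

section
/- In the odd unimodular lattice I_{2,10} with basis h₁,h₂,e₁,…,e₁₀, let v₁ = 2h₁+2h₂−e₁−e₂−e₃−e₄−e₅ and v₂ = 2h₁−2h₂−e₆−e₇−e₈−e₉−e₁₀, and let M = {x ∈ ℤ¹² : B(x,v₁) = B(x,v₂) = 0} be their orthogonal complement. Let R ⊆ ℤ¹² be the ℤ-span of the ten vectors r₁ = e₁−e₂, r₂ = e₂−e₃, r₃ = e₃−e₄, r₄ = e₄−e₅, r₅ = h₁+h₂−e₁−e₂−e₃−e₄, r₆ = e₆−e₇, r₇ = e₇−e₈, r₈ = e₈−e₉, r₉ = e₉−e₁₀, r₁₀ = h₁−h₂−e₆−e₇−e₈−e₉, and let w = h₁−e₂−e₄−e₆−e₈. Then: (a) R ⊆ M and w ∈ M; (b) each rᵢ satisfies B(rᵢ,rᵢ) = −2, and the Gram matrix of (r₁,…,r₁₀) is that of the root lattice A₅ ⊕ A₅ (B(rᵢ,r_{i+1}) = 1 for i ∈ {1,2,3,4} and i ∈ {6,7,8,9}, and all other pairings among distinct rᵢ are 0);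 (c) w ∉ R; and (d) M = R + ℤw, so R has index 2 in M. -/
/-!
Subtracting multiples of `r₅` and `r₁₀` (whose `h`-parts are `(1, 1)` and `(1, -1)`) kills the
`h`-part of `x ∈ M` exactly when `x(h₁) + x(h₂)` is even. An element of `M` with zero `h`-part has
coordinate sum zero on each block `e₁, …, e₅` and `e₆, …, e₁₀`, so it lies in the span of the `A₄`
chains `r₁, …, r₄` and `r₆, …, r₉`. Hence `R` is the kernel of the parity of `x(h₁) + x(h₂)` on `M`,
and `w`, of odd parity, represents the nontrivial class of `M / R`.
-/

namespace Stmt17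

/-- The diagonal signs of the bilinear form of `I_{2,10}`: `+1` on the first two coordinates
(the hyperbolic part `h₁, h₂`) and `-1` on the remaining ten (`e₁, …, e₁₀`). -/
def sgn (i : Fin 12) : ℤ := if (i : ℕ) < 2 then 1 else -1

/-- The bilinear form of the odd unimodular lattice `I_{2,10}` on `ℤ¹²`. -/
def B (x y : Fin 12 → ℤ) : ℤ := ∑ i, sgn i * x i * y i

lemma B_add (x y z : Fin 12 → ℤ) : B (x + y) z = B x z + B y z := by
  simp only [B, Pi.add_apply, ← Finset.sum_add_distrib]
  exact Finset.sum_congr rfl fun i _ => by ring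

lemma B_smul (c : ℤ) (x y : Fin 12 → ℤ) : B (c • x) y = c * B x y := by
  simp only [B, Finset.mul_sum, Pi.smul_apply, smul_eq_mul]
  exact Finset.sum_congr rfl fun i _ => by ring

/-- `v₁ = 2h₁ + 2h₂ − e₁ − e₂ − e₃ − e₄ − e₅`. -/
def v₁ : Fin 12 → ℤ := ![2, 2, -1, -1, -1, -1, -1, 0, 0, 0, 0, 0]

/-- `v₂ = 2h₁ − 2h₂ − e₆ − e₇ − e₈ − e₉ − e₁₀`. -/
def v₂ : Fin 12 → ℤ := ![2, -2, 0, 0, 0, 0, 0, -1, -1, -1, -1, -1]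

/-- The orthogonal complement `M` of `v₁` and `v₂` in `I_{2,10}`. -/
def M : Submodule ℤ (Fin 12 → ℤ) where
  carrier := {x | B x v₁ = 0 ∧ B x v₂ = 0}
  zero_mem' := by
    constructor <;> simp [B]
  add_mem' := by
    rintro a b ⟨ha1, ha2⟩ ⟨hb1, hb2⟩
    exact ⟨by rw [B_add, ha1, hb1, add_zero], by rw [B_add, ha2, hb2, add_zero]⟩
  smul_mem' := by
    rintro c a ⟨ha1, ha2⟩
    exact ⟨by rw [B_smul, ha1, mul_zero], by rw [B_smul, ha2, mul_zero]⟩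

/-- The ten vectors `r₁, …, r₁₀` spanning a root system of type `A₅ ⊕ A₅`. -/
def r : Fin 10 → (Fin 12 → ℤ) :=
  ![![0, 0, 1, -1, 0, 0, 0, 0, 0, 0, 0, 0],
    ![0, 0, 0, 1, -1, 0, 0, 0, 0, 0, 0, 0],
    ![0, 0, 0, 0, 1, -1, 0, 0, 0, 0, 0, 0],
    ![0, 0, 0, 0, 0, 1, -1, 0, 0, 0, 0, 0],
    ![1, 1, -1, -1, -1, -1, 0, 0, 0, 0, 0, 0],
    ![0, 0, 0, 0, 0, 0, 0, 1, -1, 0, 0, 0],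
    ![0, 0, 0, 0, 0, 0, 0, 0, 1, -1, 0, 0],
    ![0, 0, 0, 0, 0, 0, 0, 0, 0, 1, -1, 0],
    ![0, 0, 0, 0, 0, 0, 0, 0, 0, 0, 1, -1],
    ![1, -1, 0, 0, 0, 0, 0, -1, -1, -1, -1, 0]]

/-- `w = h₁ − e₂ − e₄ − e₆ − e₈`. -/
def w : Fin 12 → ℤ := ![1, 0, 0, -1, 0, -1, 0, -1, 0, -1, 0, 0]

/-- The sublattice `R` spanned by `r₁, …, r₁₀`. -/
def R : Submodule ℤ (Fin 12 → ℤ) := Submodule.span ℤ (Set.range r)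

/-- The Gram matrix of the root lattice `A₅ ⊕ A₅` in the basis `r₁, …, r₁₀`: diagonal `−2`,
entries `1` for neighbouring indices within each of the two blocks `{1,…,5}`, `{6,…,10}`,
and `0` otherwise. -/
def gram (i j : Fin 10) : ℤ :=
  if i = j then -2
  else if (((i : ℕ) < 5) ↔ ((j : ℕ) < 5)) ∧ ((i : ℕ) + 1 = (j : ℕ) ∨ (j : ℕ) + 1 = (i : ℕ))
    then 1 else 0

lemma mem_M_iff (x : Fin 12 → ℤ) :
    x ∈ M ↔ 2 * x 0 + 2 * x 1 + x 2 + x 3 + x 4 + x 5 + x 6 = 0 ∧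
      2 * x 0 - 2 * x 1 + x 7 + x 8 + x 9 + x 10 + x 11 = 0 := by
  change B x v₁ = 0 ∧ B x v₂ = 0 ↔ _
  simp only [B, sgn, Order.lt_two_iff, Int.reduceNeg, ite_mul, one_mul, neg_mul, v₁, v₂,
    Fin.sum_univ_succ, Fin.isValue, Fin.coe_ofNat_eq_mod, Nat.zero_mod, zero_le, ↓reduceIte,
    Matrix.cons_val_zero, Fin.val_succ, add_le_iff_nonpos_left, nonpos_iff_eq_zero,
    Fin.val_eq_zero_iff, Matrix.cons_val_succ, Fin.succ_zero_eq_one, Fin.succ_ne_zero,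
    Finset.sum_neg_distrib, Fin.succ_one_eq_two, mul_neg, mul_one, Fin.reduceSucc, mul_zero,
    Finset.univ_unique, Fin.default_eq_zero, Matrix.cons_val_fin_one, Finset.sum_const_zero,
    Finset.sum_singleton]
  omega

lemma r_mem_M (i : Fin 10) : r i ∈ M := by
  rw [mem_M_iff]
  fin_cases i <;> decide

lemma R_le_M : R ≤ M :=
  Submodule.span_le.mpr (Set.range_subset_iff.mpr r_mem_M)

lemma w_mem_M : w ∈ M := by
  rw [mem_M_iff]
  decide

lemma r_mem_R (i : Fin 10) : r i ∈ R :=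
  Submodule.subset_span (Set.mem_range_self i)

lemma mem_R_of_mem_M_of_apply_zero_of_apply_one {x : Fin 12 → ℤ} (hx : x ∈ M) (h₀ : x 0 = 0)
    (h₁ : x 1 = 0) : x ∈ R := by
  obtain ⟨hv₁, hv₂⟩ := (mem_M_iff x).mp hx
  -- the coefficients are partial sums of `x` along the blocks `e₁, …, e₅` and `e₆, …, e₁₀`
  have hsum : x = x 2 • r 0 + (x 2 + x 3) • r 1 + (x 2 + x 3 + x 4) • r 2 +
      (x 2 + x 3 + x 4 + x 5) • r 3 + x 7 • r 5 + (x 7 + x 8) • r 6 + (x 7 + x 8 + x 9) • r 7 +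
      (x 7 + x 8 + x 9 + x 10) • r 8 := by
    funext j
    fin_cases j <;>
      simp only [r, Pi.add_apply, Pi.smul_apply, smul_eq_mul, Matrix.cons_val, Fin.isValue,
        Fin.reduceFinMk, Fin.zero_eta, Fin.mk_one] <;>
      linarith
  rw [hsum]
  repeat' apply Submodule.add_mem
  all_goals exact Submodule.smul_mem _ _ (r_mem_R _)

lemma mem_R_of_mem_M_of_even {x : Fin 12 → ℤ} (hx : x ∈ M) (heven : (2 : ℤ) ∣ x 0 + x 1) :
    x ∈ R := by
  obtain ⟨k, hk⟩ := heven
  have hy : x - k • r 4 - (x 0 - k) • r 9 ∈ R := by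
    refine mem_R_of_mem_M_of_apply_zero_of_apply_one ?_ ?_ ?_
    · exact M.sub_mem (M.sub_mem hx (M.smul_mem _ (r_mem_M 4))) (M.smul_mem _ (r_mem_M 9))
    all_goals
      simp only [r, Pi.sub_apply, Pi.smul_apply, smul_eq_mul, Matrix.cons_val, Fin.isValue]
      linarith
  simpa only [sub_add_cancel] using
    R.add_mem (R.add_mem hy (R.smul_mem (x 0 - k) (r_mem_R 9))) (R.smul_mem k (r_mem_R 4))

/-- On `M`, this is the quotient map `M → M / R ≅ ℤ/2`. -/
def hParity : (Fin 12 → ℤ) →+ ZMod 2 :=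
  AddMonoidHom.mk' (fun x => ((x 0 + x 1 : ℤ) : ZMod 2)) fun x y => by
    push_cast [Pi.add_apply]
    ring

lemma hParity_apply (x : Fin 12 → ℤ) : hParity x = ((x 0 + x 1 : ℤ) : ZMod 2) := rfl

lemma hParity_w : hParity w = 1 := by decide

lemma R_le_ker_hParity : R.toAddSubgroup ≤ hParity.ker := by
  intro x hx
  induction hx using Submodule.span_induction with
  | mem y hy =>
    obtain ⟨i, rfl⟩ := hy
    fin_cases i <;> decide
  | zero => exact hParity.ker.zero_mem
  | add y z _ _ hy hz => exact hParity.ker.add_mem hy hz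
  | smul c y _ hy => exact hParity.ker.zsmul_mem hy c

lemma mem_R_iff (x : Fin 12 → ℤ) : x ∈ R ↔ x ∈ M ∧ hParity x = 0 := by
  refine ⟨fun hx => ⟨R_le_M hx, R_le_ker_hParity hx⟩, fun ⟨hx, hpar⟩ => ?_⟩
  rw [hParity_apply, ZMod.intCast_zmod_eq_zero_iff_dvd] at hpar
  exact mem_R_of_mem_M_of_even hx (by exact_mod_cast hpar)

lemma w_not_mem_R : w ∉ R := fun h => by
  simpa [hParity_w] using ((mem_R_iff w).mp h).2

lemma M_le_R_sup_span_w : M ≤ R ⊔ Submodule.span ℤ {w} := by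
  intro x hx
  by_cases heven : (2 : ℤ) ∣ x 0 + x 1
  · exact Submodule.mem_sup_left (mem_R_of_mem_M_of_even hx heven)
  · have hxw : x - w ∈ R := by
      refine mem_R_of_mem_M_of_even (M.sub_mem hx w_mem_M) ?_
      simp only [Pi.sub_apply, w, Matrix.cons_val, Fin.isValue]
      omega
    simpa only [sub_add_cancel] using
      Submodule.add_mem_sup hxw (Submodule.mem_span_singleton_self w)

lemma map_hParity_M : M.toAddSubgroup.map hParity = ⊤ := by
  refine (AddSubgroup.eq_top_iff' _).mpr fun z => ?_
  fin_cases z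
  · exact AddSubgroup.zero_mem _
  · exact ⟨w, w_mem_M, hParity_w⟩

lemma relIndex_R_M : AddSubgroup.relIndex R.toAddSubgroup M.toAddSubgroup = 2 := by
  have hR : R.toAddSubgroup = hParity.ker ⊓ M.toAddSubgroup := by
    ext x
    simp [mem_R_iff, and_comm]
  rw [hR, AddSubgroup.inf_relIndex_right, AddSubgroup.relIndex_ker, map_hParity_M,
    AddSubgroup.card_top, Nat.card_zmod]

lemma B_r_eq_gram (i j : Fin 10) : B (r i) (r j) = gram i j := by
  revert i j
  decide

lemma M_eq_R_sup_span_w : M = R ⊔ Submodule.span ℤ {w} :=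
  le_antisymm M_le_R_sup_span_w
    (sup_le R_le_M ((Submodule.span_singleton_le_iff_mem _ _).mpr w_mem_M))

/-- In `I_{2,10}`, the orthogonal complement `M` of `v₁, v₂` contains the `A₅ ⊕ A₅`
root lattice `R` spanned by `r₁, …, r₁₀` together with the glue vector
`w = h₁ − e₂ − e₄ − e₆ − e₈`, and `M = R + ℤw` with `R` of index 2 in `M`. -/
theorem orthogonal_complement_is_A5A5_plus_glue :
    (R ≤ M ∧ w ∈ M) ∧
    (∀ i j : Fin 10, B (r i) (r j) = gram i j) ∧
    w ∉ R ∧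
    (M = R ⊔ Submodule.span ℤ {w} ∧
      AddSubgroup.relIndex R.toAddSubgroup M.toAddSubgroup = 2) :=
  ⟨⟨R_le_M, w_mem_M⟩, B_r_eq_gram, w_not_mem_R, M_eq_R_sup_span_w, relIndex_R_M⟩

end Stmt17
end

section
/- In the odd unimodular lattice I_{2,10} with basis h₁,h₂,e₁,…,e₁₀, let rᵢ = eᵢ−e_{i+1} for 1 ≤ i ≤ 9 and v = 2h₁+2h₂−e₁−e₂−⋯−e₁₀, and let R ⊆ ℤ¹² be the ℤ-span of r₁,…,r₉,v. Then: (a) B(v,v) = −2 and B(v,rᵢ) = 0 for all i, so that the Gram matrix of (r₁,…,r₉,v) is that of the root lattice A₉ ⊕ A₁; (b) the vector u = h₁+h₂−e₂−e₄−e₆−e₈−e₁₀ satisfies 2u = r₁+r₃+r₅+r₇+r₉+v and u ∉ R; and (c) the saturation of R in ℤ¹² equals R + ℤu, so R has index 2 in its saturation. -/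
/-!
The two rows of `annR` are functionals vanishing on `R`, so the saturation of `R` lies in their
common kernel. That kernel is `R + ℤu`: for `x` in it, `x - x₀ u` has vanishing `h`-coordinates
and coordinate sum zero, hence lies in the `A₉` lattice spanned by the `rᵢ`. Conversely `2u ∈ R`
puts `R + ℤu` inside the saturation. The parity of the first coordinate vanishes on `R` but not
on `u`, which gives `u ∉ R` and index exactly 2.
-/

namespace Stmt18

/-- The diagonal signs of the bilinear form of `I_{2,10}`: `+1` on the first two coordinates
(the hyperbolic part `h₁, h₂`) and `-1` on the remaining ten (`e₁, …, e₁₀`). -/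
def sgn (i : Fin 12) : ℤ := if (i : ℕ) < 2 then 1 else -1

/-- The bilinear form of the odd unimodular lattice `I_{2,10}` on `ℤ¹²`. -/
def B (x y : Fin 12 → ℤ) : ℤ := ∑ i, sgn i * x i * y i

/-- The nine vectors `rᵢ = eᵢ − e_{i+1}`, `1 ≤ i ≤ 9`. -/
def r : Fin 9 → (Fin 12 → ℤ) :=
  ![![0, 0, 1, -1, 0, 0, 0, 0, 0, 0, 0, 0],
    ![0, 0, 0, 1, -1, 0, 0, 0, 0, 0, 0, 0],
    ![0, 0, 0, 0, 1, -1, 0, 0, 0, 0, 0, 0],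
    ![0, 0, 0, 0, 0, 1, -1, 0, 0, 0, 0, 0],
    ![0, 0, 0, 0, 0, 0, 1, -1, 0, 0, 0, 0],
    ![0, 0, 0, 0, 0, 0, 0, 1, -1, 0, 0, 0],
    ![0, 0, 0, 0, 0, 0, 0, 0, 1, -1, 0, 0],
    ![0, 0, 0, 0, 0, 0, 0, 0, 0, 1, -1, 0],
    ![0, 0, 0, 0, 0, 0, 0, 0, 0, 0, 1, -1]]

/-- `v = 2h₁ + 2h₂ − e₁ − e₂ − ⋯ − e₁₀`. -/
def v : Fin 12 → ℤ := ![2, 2, -1, -1, -1, -1, -1, -1, -1, -1, -1, -1]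

/-- `u = h₁ + h₂ − e₂ − e₄ − e₆ − e₈ − e₁₀`. -/
def u : Fin 12 → ℤ := ![1, 1, 0, -1, 0, -1, 0, -1, 0, -1, 0, -1]

/-- The sublattice `R` spanned by `r₁, …, r₉, v`. -/
def R : Submodule ℤ (Fin 12 → ℤ) := Submodule.span ℤ (Set.range r ∪ {v})

/-- The Gram matrix of the root lattice `A₉` in the basis `r₁, …, r₉`: diagonal `−2`,
entries `1` for neighbouring indices, `0` otherwise. -/
def gramA9 (i j : Fin 9) : ℤ :=
  if i = j then -2
  else if (i : ℕ) + 1 = (j : ℕ) ∨ (j : ℕ) + 1 = (i : ℕ) then 1 else 0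

end Stmt18

section Saturation

open Submodule

variable {A M : Type*} [CommRing A] [AddCommGroup M] [Module A M]

theorem Submodule.smul_mem_of_mem_sup_span_singleton {N : Submodule A M} {u x : M} {c : A}
    (hu : c • u ∈ N) (hx : x ∈ N ⊔ span A {u}) : c • x ∈ N := by
  obtain ⟨y, hy, z, hz, rfl⟩ := mem_sup.1 hx
  obtain ⟨a, rfl⟩ := mem_span_singleton.1 hz
  rw [smul_add, smul_comm]
  exact add_mem (smul_mem _ _ hy) (smul_mem _ _ hu)

theorem Submodule.apply_eq_zero_of_smul_mem [IsDomain A] {P : Type*} [AddCommGroup P]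
    [Module A P] [Module.IsTorsionFree A P] {N : Submodule A M} {f : M →ₗ[A] P}
    (hN : N ≤ LinearMap.ker f) {c : A} (hc : c ≠ 0) {x : M} (hx : c • x ∈ N) : f x = 0 := by
  have hfx := hN hx
  rw [LinearMap.mem_ker, map_smul, smul_eq_zero] at hfx
  exact hfx.resolve_left hc

end Saturation

section IndexTwo

open Submodule

variable {M : Type*} [AddCommGroup M] {N : Submodule ℤ M} {u : M} {φ : M →ₗ[ℤ] ZMod 2}

theorem Submodule.mem_iff_apply_eq_zero_of_mem_sup_span_singleton (hN : N ≤ LinearMap.ker φ)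
    (hu : (2 : ℤ) • u ∈ N) (hφu : φ u = 1) {x : M} (hx : x ∈ N ⊔ span ℤ {u}) :
    x ∈ N ↔ φ x = 0 := by
  refine ⟨fun h => hN h, fun hφx => ?_⟩
  obtain ⟨y, hy, z, hz, rfl⟩ := mem_sup.1 hx
  obtain ⟨m, rfl⟩ := mem_span_singleton.1 hz
  have hm : (m : ZMod 2) = 0 := by
    simpa [LinearMap.mem_ker.1 (hN hy), hφu] using hφx
  obtain ⟨k, rfl⟩ := (ZMod.intCast_zmod_eq_zero_iff_dvd m 2).1 hm
  rw [mul_comm, mul_smul]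
  exact add_mem hy (smul_mem _ k hu)

theorem Submodule.relIndex_sup_span_singleton_eq_two (hN : N ≤ LinearMap.ker φ)
    (hu : (2 : ℤ) • u ∈ N) (hφu : φ u = 1) :
    N.toAddSubgroup.relIndex (N ⊔ span ℤ {u}).toAddSubgroup = 2 := by
  have hu' : u ∈ N ⊔ span ℤ {u} := mem_sup_right (mem_span_singleton_self u)
  rw [AddSubgroup.relIndex_eq_two_iff]
  refine ⟨u, hu', fun b hb => ?_⟩
  change Xor (b + u ∈ N) (b ∈ N)
  rw [mem_iff_apply_eq_zero_of_mem_sup_span_singleton hN hu hφu (add_mem hb hu'),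
    mem_iff_apply_eq_zero_of_mem_sup_span_singleton hN hu hφu hb, map_add, hφu]
  generalize φ b = z
  revert z
  decide

end IndexTwo

namespace Stmt18

open Matrix Submodule

lemma r_mem_R (i : Fin 9) : r i ∈ R := subset_span (Or.inl ⟨i, rfl⟩)

lemma v_mem_R : v ∈ R := subset_span (Or.inr rfl)

lemma two_smul_u : (2 : ℤ) • u = r 0 + r 2 + r 4 + r 6 + r 8 + v := by decide

lemma two_smul_u_mem_R : (2 : ℤ) • u ∈ R := by
  rw [two_smul_u]
  exact add_mem (add_mem (add_mem (add_mem (add_mem (r_mem_R 0) (r_mem_R 2)) (r_mem_R 4))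
    (r_mem_R 6)) (r_mem_R 8)) v_mem_R

lemma R_le_ker {P : Type*} [AddCommGroup P] (f : (Fin 12 → ℤ) →ₗ[ℤ] P)
    (hr : ∀ i, f (r i) = 0) (hv : f v = 0) : R ≤ LinearMap.ker f := by
  rw [R, span_le]
  rintro x (⟨i, rfl⟩ | rfl)
  exacts [hr i, hv]

/-- The rows span the annihilator of `R` in the dual of `ℤ¹²`. -/
def annR : Matrix (Fin 2) (Fin 12) ℤ :=
  !![1, -1, 0, 0, 0, 0, 0, 0, 0, 0, 0, 0;
     5, 0, 1, 1, 1, 1, 1, 1, 1, 1, 1, 1]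

def parity : (Fin 12 → ℤ) →ₗ[ℤ] ZMod 2 :=
  (Int.castAddHom (ZMod 2)).toIntLinearMap ∘ₗ LinearMap.proj 0

lemma R_le_ker_annR : R ≤ LinearMap.ker annR.mulVecLin :=
  R_le_ker _ (by decide) (by decide)

lemma R_le_ker_parity : R ≤ LinearMap.ker parity :=
  R_le_ker _ (by decide) (by decide)

lemma parity_u : parity u = 1 := by decide

lemma mem_span_range_r {w : Fin 12 → ℤ} (h0 : w 0 = 0) (h1 : w 1 = 0) (hsum : ∑ j, w j = 0) :
    w ∈ span ℤ (Set.range r) := by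
  replace hsum : w 0 + w 1 + w 2 + w 3 + w 4 + w 5 + w 6 + w 7 + w 8 + w 9 + w 10 + w 11 = 0 := by
    simpa [Fin.sum_univ_succ, add_assoc] using hsum
  have hw : w = ∑ k : Fin 9,
      (∑ j ∈ Finset.univ.filter (fun j : Fin 12 => (j : ℕ) ≤ k + 2), w j) • r k := by
    funext j
    fin_cases j <;> simp [r, Fin.sum_univ_succ, Finset.sum_filter] <;> omega
  rw [hw]
  exact sum_mem fun k _ => smul_mem _ _ (subset_span ⟨k, rfl⟩)

lemma ker_annR_le : LinearMap.ker annR.mulVecLin ≤ R ⊔ span ℤ {u} := by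
  intro x hx
  have hx0 : x 0 - x 1 = 0 := by
    simpa [annR, mulVec, dotProduct, Fin.sum_univ_succ, ← sub_eq_add_neg] using congrFun hx 0
  have hx1 : 5 * x 0 + x 2 + x 3 + x 4 + x 5 + x 6 + x 7 + x 8 + x 9 + x 10 + x 11 = 0 := by
    simpa [annR, mulVec, dotProduct, Fin.sum_univ_succ, add_assoc] using congrFun hx 1
  have hw : x - x 0 • u ∈ span ℤ (Set.range r) := by
    apply mem_span_range_r <;> simp [u, Fin.sum_univ_succ] <;> omega
  rw [← sub_add_cancel x (x 0 • u)]
  exact add_mem (mem_sup_left (span_mono Set.subset_union_left hw))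
    (mem_sup_right (smul_mem _ _ (mem_span_singleton_self u)))

/-- In `I_{2,10}`, the vectors `r₁, …, r₉, v` span a root lattice of type `A₉ ⊕ A₁`, the glue
vector `u = h₁ + h₂ − e₂ − e₄ − e₆ − e₈ − e₁₀` satisfies `2u = r₁+r₃+r₅+r₇+r₉+v` and `u ∉ R`,
and the saturation (primitive hull) of `R` in `ℤ¹²` is `R + ℤu`, in which `R` has index 2. -/
theorem A9A1_saturation :
    (B v v = -2 ∧ (∀ i : Fin 9, B v (r i) = 0) ∧
      ∀ i j : Fin 9, B (r i) (r j) = gramA9 i j) ∧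
    ((2 : ℤ) • u = r 0 + r 2 + r 4 + r 6 + r 8 + v ∧ u ∉ R) ∧
    ({x : Fin 12 → ℤ | ∃ n : ℕ, 0 < n ∧ (n : ℤ) • x ∈ R}
        = ↑(R ⊔ Submodule.span ℤ {u}) ∧
      AddSubgroup.relIndex R.toAddSubgroup (R ⊔ Submodule.span ℤ {u}).toAddSubgroup = 2) := by
  refine ⟨⟨by decide, by decide, by decide⟩, ⟨two_smul_u, fun hu => ?_⟩, ?_,
    relIndex_sup_span_singleton_eq_two R_le_ker_parity two_smul_u_mem_R parity_u⟩
  · simpa [parity_u] using R_le_ker_parity hu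
  · ext x
    refine ⟨fun ⟨n, hn, hnx⟩ => ker_annR_le ?_, fun hx => ⟨2, two_pos, ?_⟩⟩
    · exact apply_eq_zero_of_smul_mem R_le_ker_annR (Int.natCast_ne_zero.2 hn.ne') hnx
    · exact_mod_cast smul_mem_of_mem_sup_span_singleton two_smul_u_mem_R hx

end Stmt18
end
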